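/- arXiv:2402.11935 — 4 statements merged into one kernel-verified Lean document; each statement's English description precedes it below -/
import Mathlib

section
/- Let k be a field and d ≥ 2 an integer. Let R = k[X_1,…,X_d]/I_Δ, where I_Δ = (X_iX_j : 1 ≤ i < j ≤ d), let x_1,…,x_d denote the images of the variables, let P_i = (x_1,…,x_{i-1},x_{i+1},…,x_d) for each i, and let m = (x_1,…,x_d). Then for every n ≥ 1, the saturation satisfies (P_i^n :_R m^∞) = P_i. -/
open Filter IsLocalRing

set_option synthInstance.maxHeartbeats 1000000
set_option maxHeartbeats 1000000

/-- The saturation `I :_R m^∞ = ⋃ᵢ (I :_R mⁱ)` of an ideal `I` with respect to `m`. -/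
noncomputable def Ideal.sat {R : Type*} [CommRing R] (I m : Ideal R) : Ideal R :=
  ⨆ i : ℕ, Submodule.colon I ((m ^ i : Ideal R) : Set R)

/-- The length `λ_R(M)` of a module, valued in `ℕ∞` (the Krull dimension of its
submodule lattice; for modules of finite length this is the usual length). -/
noncomputable def moduleLength (R M : Type*) [Ring R] [AddCommGroup M] [Module R M] : ℕ∞ :=
  WithBot.unbotD 0 (Order.krullDim (Submodule R M))

/-- `λ_R((Iⁿ :_R m^∞)/Iⁿ)`, the value of the ε-function of `I` at `n`. -/
noncomputable def satQuotLength {R : Type*} [CommRing R] (I m : Ideal R) (n : ℕ) : ℕ∞ :=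
  moduleLength R ↥((Ideal.sat (I ^ n) m).map (Submodule.mkQ (I ^ n)))

/-- The face ideal `I_Δ = (XᵢXⱼ : i < j)` of the simplicial complex
`Δ = {∅, {1}, …, {d}}` in `k[X₁, …, X_d]`. -/
noncomputable def faceIdeal (k : Type*) [CommRing k] (d : ℕ) : Ideal (MvPolynomial (Fin d) k) :=
  Ideal.span {f | ∃ i j : Fin d, i < j ∧ f = MvPolynomial.X i * MvPolynomial.X j}

/-- The image `xⱼ` of the variable `Xⱼ` in the face ring `k[X₁,…,X_d]/I_Δ`. -/
noncomputable def faceRingX (k : Type*) [CommRing k] (d : ℕ) (j : Fin d) :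
    MvPolynomial (Fin d) k ⧸ faceIdeal k d :=
  Ideal.Quotient.mk (faceIdeal k d) (MvPolynomial.X j)

section Aux

variable (k : Type) [Field k] (d : ℕ) (i : Fin d)

noncomputable def auxPhi : MvPolynomial (Fin d) k →ₐ[k] MvPolynomial (Fin d) k :=
  MvPolynomial.aeval (fun j => if j = i then MvPolynomial.X i else 0)

lemma aux_sub_phi_mem (f : MvPolynomial (Fin d) k) :
    f - auxPhi k d i f ∈ Ideal.span (MvPolynomial.X '' {j | j ≠ i}) := by
  set Q := Ideal.span (MvPolynomial.X '' {j | j ≠ i} : Set (MvPolynomial (Fin d) k))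
  induction f using MvPolynomial.induction_on with
  | C a => simp [auxPhi]
  | add p q hp hq =>
      have : p + q - auxPhi k d i (p + q) = (p - auxPhi k d i p) + (q - auxPhi k d i q) := by
        rw [map_add]; ring
      rw [this]; exact Q.add_mem hp hq
  | mul_X p j hp =>
      by_cases hj : j = i
      · subst hj
        have : p * MvPolynomial.X j - auxPhi k d j (p * MvPolynomial.X j)
            = (p - auxPhi k d j p) * MvPolynomial.X j := by
          simp [auxPhi]; ring
        rw [this]; exact Q.mul_mem_right _ hp
      · have : p * MvPolynomial.X j - auxPhi k d i (p * MvPolynomial.X j)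
            = p * MvPolynomial.X j := by
          simp [auxPhi, hj]
        rw [this]
        exact Q.mul_mem_left p (Ideal.subset_span ⟨j, hj, rfl⟩)

lemma aux_ker_phi :
    RingHom.ker (auxPhi k d i).toRingHom = Ideal.span (MvPolynomial.X '' {j | j ≠ i}) := by
  apply le_antisymm
  · intro f hf
    have h0 : auxPhi k d i f = 0 := hf
    have := aux_sub_phi_mem k d i f
    rwa [h0, sub_zero] at this
  · rw [Ideal.span_le]
    rintro _ ⟨j, hj, rfl⟩
    simp [RingHom.mem_ker, auxPhi, if_neg hj]

lemma aux_Q_prime : (Ideal.span (MvPolynomial.X '' {j | j ≠ i} :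
    Set (MvPolynomial (Fin d) k))).IsPrime := by
  rw [← aux_ker_phi k d i]
  exact RingHom.ker_isPrime _

lemma aux_X_not_mem : MvPolynomial.X i ∉ (Ideal.span (MvPolynomial.X '' {j | j ≠ i} :
    Set (MvPolynomial (Fin d) k))) := by
  rw [← aux_ker_phi k d i]
  intro h
  have h0 : auxPhi k d i (MvPolynomial.X i) = 0 := h
  simp only [auxPhi, MvPolynomial.aeval_X, if_pos rfl] at h0
  exact MvPolynomial.X_ne_zero i h0

lemma aux_face_le : faceIdeal k d ≤ Ideal.span (MvPolynomial.X '' ({j | j ≠ i} :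
    Set (Fin d))) := by
  rw [faceIdeal, Ideal.span_le]
  rintro _ ⟨a, b, hab, rfl⟩
  by_cases ha : a = i
  · subst ha
    have hb : b ≠ a := fun h => by simp [h] at hab
    exact Ideal.mul_mem_left _ _ (Ideal.subset_span ⟨b, hb, rfl⟩)
  · exact Ideal.mul_mem_right _ _ (Ideal.subset_span ⟨a, ha, rfl⟩)

lemma aux_P_eq : Ideal.span (faceRingX k d '' {j | j ≠ i})
    = (Ideal.span (MvPolynomial.X '' {j | j ≠ i})).map
      (Ideal.Quotient.mk (faceIdeal k d)) := by
  rw [Ideal.map_span, Set.image_image]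
  rfl

lemma aux_P_prime : (Ideal.span (faceRingX k d '' {j | j ≠ i})).IsPrime := by
  rw [aux_P_eq]
  have := aux_Q_prime k d i
  exact Ideal.map_isPrime_of_surjective Ideal.Quotient.mk_surjective
    (by rw [Ideal.mk_ker]; exact aux_face_le k d i)

lemma aux_x_not_mem : faceRingX k d i ∉ Ideal.span (faceRingX k d '' {j | j ≠ i}) := by
  rw [aux_P_eq]
  intro h
  have hc : MvPolynomial.X i ∈ Ideal.comap (Ideal.Quotient.mk (faceIdeal k d))
      ((Ideal.span (MvPolynomial.X '' {j | j ≠ i})).map (Ideal.Quotient.mk (faceIdeal k d))) := h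
  rw [Ideal.comap_map_of_surjective _ Ideal.Quotient.mk_surjective,
    ← RingHom.ker_eq_comap_bot, Ideal.mk_ker,
    sup_eq_left.mpr (aux_face_le k d i)] at hc
  exact aux_X_not_mem k d i hc

lemma aux_mul_eq_zero {a b : Fin d} (h : a ≠ b) : faceRingX k d a * faceRingX k d b = 0 := by
  rw [faceRingX, faceRingX, ← map_mul, Ideal.Quotient.eq_zero_iff_mem]
  rcases lt_or_gt_of_ne h with h' | h'
  · exact Ideal.subset_span ⟨a, b, h', rfl⟩
  · exact Ideal.subset_span ⟨b, a, h', (mul_comm _ _)⟩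

end Aux

/-- In the face ring `R = k[X₁,…,X_d]/I_Δ` (`d ≥ 2`), for
`Pᵢ = (x₁,…,x_{i-1},x_{i+1},…,x_d)` and `m = (x₁,…,x_d)` one has
`(Pᵢⁿ : m^∞) = Pᵢ` for all `n ≥ 1`. -/
theorem sat_pow_face_ring_prime
    (k : Type) [Field k] (d : ℕ) (hd : 2 ≤ d) (i : Fin d) (n : ℕ) (hn : 1 ≤ n) :
    Ideal.sat ((Ideal.span (faceRingX k d '' {j | j ≠ i})) ^ n)
        (Ideal.span (Set.range (faceRingX k d)))
      = Ideal.span (faceRingX k d '' {j | j ≠ i}) := by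
  set P : Ideal (MvPolynomial (Fin d) k ⧸ faceIdeal k d) :=
    Ideal.span (faceRingX k d '' {j | j ≠ i}) with hP
  set m : Ideal (MvPolynomial (Fin d) k ⧸ faceIdeal k d) :=
    Ideal.span (Set.range (faceRingX k d)) with hm
  have hPprime := aux_P_prime k d i
  apply le_antisymm
  · rw [Ideal.sat]
    apply iSup_le
    intro N
    intro r hr
    have hx : faceRingX k d i ^ N ∈ m ^ N :=
      Ideal.pow_mem_pow (Ideal.subset_span (Set.mem_range_self i)) N
    have := Submodule.mem_colon.mp hr _ hx
    have hrp : r * faceRingX k d i ^ N ∈ P := by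
      have hle : P ^ n ≤ P := Ideal.pow_le_self (by omega)
      exact hle this
    rcases hPprime.mem_or_mem hrp with h | h
    · exact h
    · exact absurd (hPprime.mem_of_pow_mem N h) (aux_x_not_mem k d i)
  · -- P ≤ sat
    have hsub : P ≤ Submodule.colon (P ^ n) ((m ^ (n + n) : Ideal _) : Set _) := by
      rw [hP, Ideal.span_le]
      rintro _ ⟨j, hj, rfl⟩
      rw [SetLike.mem_coe, Submodule.mem_colon]
      intro p hp
      -- m = P ⊔ span {x_i}
      have hmsplit : m ≤ P ⊔ Ideal.span {faceRingX k d i} := by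
        rw [hm, Ideal.span_le]
        intro x hx
        obtain ⟨l, rfl⟩ := hx
        by_cases hl : l = i
        · subst hl; exact Ideal.mem_sup_right (Ideal.subset_span rfl)
        · exact Ideal.mem_sup_left (Ideal.subset_span ⟨l, hl, rfl⟩)
      have hpow : m ^ (n + n) ≤ P ^ n ⊔ (Ideal.span {faceRingX k d i}) ^ n := by
        calc m ^ (n + n) ≤ (P ⊔ Ideal.span {faceRingX k d i}) ^ (n + n) :=
              Ideal.pow_right_mono hmsplit _
        _ ≤ P ^ n ⊔ (Ideal.span {faceRingX k d i}) ^ n := Ideal.sup_pow_add_le_pow_sup_pow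
      have hp' := hpow hp
      rw [Ideal.span_singleton_pow, Submodule.mem_sup] at hp'
      obtain ⟨y, hy, z, hz, rfl⟩ := hp'
      rw [Ideal.mem_span_singleton] at hz
      obtain ⟨c, rfl⟩ := hz
      have hz0 : faceRingX k d j * (faceRingX k d i ^ n * c) = 0 := by
        obtain ⟨n', rfl⟩ : ∃ n', n = n' + 1 := ⟨n - 1, by omega⟩
        have h1 : faceRingX k d j * faceRingX k d i = 0 := aux_mul_eq_zero k d hj
        have h2 : faceRingX k d j * (faceRingX k d i ^ (n' + 1) * c)
            = (faceRingX k d j * faceRingX k d i) * (faceRingX k d i ^ n' * c) := by ring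
        rw [h2, h1, zero_mul]
      have : faceRingX k d j • (y + faceRingX k d i ^ n * c)
          = faceRingX k d j * y + faceRingX k d j * (faceRingX k d i ^ n * c) := by
        simp [smul_eq_mul]; ring
      rw [this, hz0, add_zero]
      exact Ideal.mul_mem_left _ _ hy
    calc P ≤ Submodule.colon (P ^ n) ((m ^ (n + n) : Ideal _) : Set _) := hsub
    _ ≤ Ideal.sat (P ^ n) m := le_iSup (fun N => Submodule.colon (P ^ n) ((m ^ N : Ideal _) : Set _)) (n + n)
end

section
/- Let R = ⨁_{u≥0} R_u be a standard graded finitely generated algebra over a field R_0 = k, with homogeneous maximal ideal m = ⨁_{u≥1} R_u. Assume R is an integral domain with dim R ≥ 2, and let I ⊆ R be a nonzero homogeneous ideal that is not m-primary, minimally generated by homogeneous elements of degrees b_1 ≤ ⋯ ≤ b_s. Then there exists an integer u_0 ≥ 0 such that for all integers v ≥ 0 and all u ≥ b_s·v + u_0, the degree-u graded components satisfy ((I^v :_R m^∞))_u = (I^v)_u. -/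
open Filter IsLocalRing

set_option maxHeartbeats 1000000
set_option synthInstance.maxHeartbeats 1000000

section SatAux

open DirectSum Polynomial

/-! ### Generic facts about `Ideal.sat` -/

variable {A : Type*} [CommRing A]

theorem satp_mem_sat_iff {J m : Ideal A} {x : A} :
    x ∈ J.sat m ↔ ∃ i : ℕ, x ∈ Submodule.colon J ((m ^ i : Ideal A) : Set A) := by
  unfold Ideal.sat
  have hd : Directed (· ≤ ·) (fun i : ℕ => Submodule.colon J ((m ^ i : Ideal A) : Set A)) :=
    fun i j =>
    ⟨i + j, Submodule.colon_mono le_rfl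
        (SetLike.coe_subset_coe.mpr (Ideal.pow_le_pow_right (by omega))),
      Submodule.colon_mono le_rfl
        (SetLike.coe_subset_coe.mpr (Ideal.pow_le_pow_right (by omega)))⟩
  exact Submodule.mem_iSup_of_directed _ hd

theorem satp_le_sat (J m : Ideal A) : J ≤ J.sat m := by
  intro x hx
  rw [satp_mem_sat_iff]
  exact ⟨0, Submodule.mem_colon.mpr fun p _ => Ideal.mul_mem_right p _ hx⟩

theorem satp_pow_mul_mem_sat {I m : Ideal A} {w lam : ℕ} {t h : A}
    (ht : t ∈ I ^ w) (hh : h ∈ (I ^ lam).sat m) : t * h ∈ (I ^ (w + lam)).sat m := by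
  rw [satp_mem_sat_iff] at hh ⊢
  obtain ⟨n, hn⟩ := hh
  refine ⟨n, Submodule.mem_colon.mpr fun p hp => ?_⟩
  have h1 : h * p ∈ I ^ lam := Submodule.mem_colon.mp hn p hp
  have h2 : t * (h * p) ∈ I ^ w * I ^ lam := Ideal.mul_mem_mul ht h1
  show t * h * p ∈ I ^ (w + lam)
  rw [pow_add, mul_assoc]
  exact h2

/-- `C_v = I^v ⊓ y·sat(I^v)`. -/
noncomputable def satC (I m : Ideal A) (y : A) (v : ℕ) : Ideal A :=
  I ^ v ⊓ Submodule.map (LinearMap.mulLeft A y) (Ideal.sat (I ^ v) m)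

/-- `Y_v = y·I^v`. -/
noncomputable def satY (I : Ideal A) (y : A) (v : ℕ) : Ideal A :=
  Submodule.map (LinearMap.mulLeft A y) (I ^ v)

theorem satp_mul_mem_satC {I m : Ideal A} {y : A} {w lam : ℕ} {t x : A}
    (ht : t ∈ I ^ w) (hx : x ∈ satC I m y lam) : t * x ∈ satC I m y (w + lam) := by
  obtain ⟨hx1, hx2⟩ := Submodule.mem_inf.mp hx
  refine Submodule.mem_inf.mpr ⟨?_, ?_⟩
  · rw [pow_add]; exact Ideal.mul_mem_mul ht hx1
  · obtain ⟨h, hh, hhx⟩ := hx2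
    refine ⟨t * h, satp_pow_mul_mem_sat ht hh, ?_⟩
    simp only [LinearMap.mulLeft_apply] at hhx ⊢
    rw [← hhx]; ring

/-- The ideal of the Rees algebra of `I` whose `v`-th level is `C_v`. -/
noncomputable def satM (I m : Ideal A) (y : A) : Ideal ↥(reesAlgebra I) where
  carrier := { p | ∀ v : ℕ, (p : A[X]).coeff v ∈ satC I m y v }
  add_mem' := by
    intro p q hp hq v
    show ((p : A[X]) + (q : A[X])).coeff v ∈ _
    rw [Polynomial.coeff_add]
    exact add_mem (hp v) (hq v)
  zero_mem' := by
    intro v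
    show (0 : A[X]).coeff v ∈ _
    simp only [Polynomial.coeff_zero]
    exact zero_mem _
  smul_mem' := by
    intro c p hp v
    show ((c : A[X]) * (p : A[X])).coeff v ∈ _
    rw [Polynomial.coeff_mul]
    refine Submodule.sum_mem _ fun x hx => ?_
    have hxv := Finset.HasAntidiagonal.mem_antidiagonal.mp hx
    have := satp_mul_mem_satC ((mem_reesAlgebra_iff I (c : A[X])).mp c.2 x.1) (hp x.2)
    rwa [hxv] at this

theorem satp_mem_satM {I m : Ideal A} {y : A} {p : ↥(reesAlgebra I)} :
    p ∈ satM I m y ↔ ∀ v : ℕ, (p : A[X]).coeff v ∈ satC I m y v := Iff.rfl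

/-! ### Graded facts -/

variable {k : Type*} [Field k] [Algebra k A]
variable (𝒜 : ℕ → Submodule k A) [GradedAlgebra 𝒜]

theorem satp_mem_irr {c : ℕ} (hc : c ≠ 0) {x : A} (hx : x ∈ 𝒜 c) :
    x ∈ (HomogeneousIdeal.irrelevant 𝒜).toIdeal := by
  have : x ∈ HomogeneousIdeal.irrelevant 𝒜 := by
    rw [HomogeneousIdeal.mem_irrelevant_iff, GradedRing.proj_apply,
      DirectSum.decompose_of_mem_ne 𝒜 hx hc]
  exact this

theorem satp_graded_le_pow_irr (hstd : ∀ n, 𝒜 (n + 1) = 𝒜 1 * 𝒜 n) :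
    ∀ N c : ℕ, N ≤ c → ∀ x ∈ 𝒜 c, x ∈ (HomogeneousIdeal.irrelevant 𝒜).toIdeal ^ N := by
  intro N
  induction N with
  | zero => intro c _ x _; simp
  | succ N ih =>
    intro c hc x hx
    obtain ⟨c', rfl⟩ : ∃ c', c = c' + 1 := ⟨c - 1, by omega⟩
    rw [hstd] at hx
    have hle : 𝒜 1 * 𝒜 c' ≤
        Submodule.restrictScalars k ((HomogeneousIdeal.irrelevant 𝒜).toIdeal ^ (N + 1)) := by
      rw [Submodule.mul_le]
      intro a ha z hz
      show a * z ∈ (HomogeneousIdeal.irrelevant 𝒜).toIdeal ^ (N + 1)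
      rw [pow_succ']
      exact Ideal.mul_mem_mul (satp_mem_irr 𝒜 one_ne_zero ha) (ih c' (by omega) z hz)
    exact hle hx

theorem satp_isHomogeneous_colon {J K : Ideal A} (hJ : J.IsHomogeneous 𝒜)
    (hK : K.IsHomogeneous 𝒜) : (Submodule.colon J K).IsHomogeneous 𝒜 := by
  intro i r hr
  rw [Submodule.mem_colon] at hr ⊢
  intro p hp
  classical
  show (DirectSum.decompose 𝒜 r i : A) * p ∈ J
  rw [← DirectSum.sum_support_decompose 𝒜 p, Finset.mul_sum]
  refine Ideal.sum_mem _ fun c _ => ?_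
  rw [← DirectSum.coe_decompose_mul_add_of_right_mem 𝒜
    (SetLike.coe_mem (DirectSum.decompose 𝒜 p c))]
  exact hJ _ (hr _ (hK c hp))

theorem satp_isHomogeneous_pow {J : Ideal A} (hJ : J.IsHomogeneous 𝒜) (n : ℕ) :
    (J ^ n).IsHomogeneous 𝒜 := by
  induction n with
  | zero => rw [pow_zero, Ideal.one_eq_top]; exact Ideal.IsHomogeneous.top 𝒜
  | succ n ih => rw [pow_succ]; exact ih.mul hJ

theorem satp_isHomogeneous_sat {J : Ideal A} (hJ : J.IsHomogeneous 𝒜) :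
    (J.sat (HomogeneousIdeal.irrelevant 𝒜).toIdeal).IsHomogeneous 𝒜 := by
  intro i r hr
  rw [satp_mem_sat_iff] at hr ⊢
  obtain ⟨n, hn⟩ := hr
  exact ⟨n, satp_isHomogeneous_colon 𝒜 hJ
    (satp_isHomogeneous_pow 𝒜 (HomogeneousIdeal.irrelevant 𝒜).isHomogeneous n) i hn⟩

theorem satp_decompose_mul_left_apply {i : ℕ} {z : A} (hz : z ∈ 𝒜 i) (x : A) (c : ℕ) :
    (DirectSum.decompose 𝒜 (z * x) c : A) =
      if i ≤ c then z * (DirectSum.decompose 𝒜 x (c - i) : A) else 0 := by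
  classical
  split_ifs with h
  · conv_lhs => rw [show c = i + (c - i) by omega]
    exact DirectSum.coe_decompose_mul_add_of_left_mem 𝒜 hz
  · have hx : ∀ j : ℕ,
        (DirectSum.decompose 𝒜 (z * (DirectSum.decompose 𝒜 x j : A)) c : A) = 0 := fun j =>
      DirectSum.decompose_of_mem_ne 𝒜 (SetLike.mul_mem_graded hz (SetLike.coe_mem _))
        (by omega)
    conv_lhs => rw [← DirectSum.sum_support_decompose 𝒜 x, Finset.mul_sum]
    rw [DirectSum.decompose_sum, DFinsupp.finset_sum_apply, Submodule.coe_sum]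
    exact Finset.sum_eq_zero fun j _ => hx j

theorem satp_decompose_mul_right_apply {d : ℕ} {a : A} (ha : a ∈ 𝒜 d) (r : A) (c : ℕ) :
    (DirectSum.decompose 𝒜 (r * a) c : A) =
      if d ≤ c then (DirectSum.decompose 𝒜 r (c - d) : A) * a else 0 := by
  rw [mul_comm r a, satp_decompose_mul_left_apply 𝒜 ha]
  split_ifs with h
  · ring
  · rfl

end SatAux

section SatMain

open DirectSum Polynomial Pointwise

variable {k : Type*} [Field k] {A : Type*} [CommRing A] [Algebra k A]
variable (𝒜 : ℕ → Submodule k A) [GradedAlgebra 𝒜]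
variable {s : ℕ} (f : Fin (s + 1) → A) (b : Fin (s + 1) → ℕ)

/-- Degree-`c` components of elements of `I^w` lie in `I^w · m^(c - β w)`. -/
theorem satp_proj_pow_mem (hstd : ∀ n, 𝒜 (n + 1) = 𝒜 1 * 𝒜 n) (hmono : Monotone b)
    (hfdeg : ∀ i, f i ∈ 𝒜 (b i)) (w : ℕ) :
    ∀ r ∈ Ideal.span (Set.range f) ^ w, ∀ c : ℕ,
      (DirectSum.decompose 𝒜 r c : A) ∈ Ideal.span (Set.range f) ^ w *
        (HomogeneousIdeal.irrelevant 𝒜).toIdeal ^ (c - b (Fin.last s) * w) := by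
  classical
  intro r hr
  have hr' : r ∈ Submodule.span A ((Set.range f) ^ w) := by
    rw [← Submodule.span_pow]; exact hr
  refine Submodule.span_induction (p := fun x _ => ∀ c : ℕ,
    (DirectSum.decompose 𝒜 x c : A) ∈ Ideal.span (Set.range f) ^ w *
      (HomogeneousIdeal.irrelevant 𝒜).toIdeal ^ (c - b (Fin.last s) * w))
    ?_ ?_ ?_ ?_ hr'
  · -- elements of (range f)^w
    intro x hxmem c
    obtain ⟨F, hF⟩ := Set.mem_pow.mp hxmem
    have hchoice : ∀ i : Fin w, ∃ j, f j = (F i : A) := fun i => (F i).2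
    choose g hg using hchoice
    have hxprod : x = ∏ i : Fin w, f (g i) := by
      rw [← hF, List.prod_ofFn]
      exact (Finset.prod_congr rfl fun i _ => hg i).symm
    have hxdeg : x ∈ 𝒜 (∑ i : Fin w, b (g i)) := by
      rw [hxprod]
      exact SetLike.prod_mem_graded 𝒜 _ _ fun i _ => hfdeg (g i)
    have hsum : (∑ i : Fin w, b (g i)) ≤ b (Fin.last s) * w := by
      calc (∑ i : Fin w, b (g i)) ≤ ∑ _i : Fin w, b (Fin.last s) :=
            Finset.sum_le_sum fun i _ => hmono (Fin.le_last _)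
        _ = b (Fin.last s) * w := by
            simp [Finset.sum_const, Finset.card_univ, mul_comm]
    have hxI : x ∈ Ideal.span (Set.range f) ^ w := by
      rw [show (Ideal.span (Set.range f) : Ideal A) ^ w
          = Submodule.span A ((Set.range f) ^ w) from Submodule.span_pow _ _]
      exact Submodule.subset_span hxmem
    by_cases hc : (∑ i : Fin w, b (g i)) = c
    · rw [← hc, DirectSum.decompose_of_mem_same 𝒜 hxdeg]
      rw [Nat.sub_eq_zero_of_le (by omega), pow_zero, mul_one]
      exact hxI
    · rw [DirectSum.decompose_of_mem_ne 𝒜 hxdeg hc]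
      exact zero_mem _
  · intro c; simp
  · intro x y _ _ hx hy c
    rw [DirectSum.decompose_add, DirectSum.add_apply, Submodule.coe_add]
    exact add_mem (hx c) (hy c)
  · intro a x _ hx c
    rw [smul_eq_mul]
    rw [← DirectSum.sum_support_decompose 𝒜 a, Finset.sum_mul]
    rw [DirectSum.decompose_sum, DFinsupp.finset_sum_apply, Submodule.coe_sum]
    refine Submodule.sum_mem _ fun i _ => ?_
    rw [satp_decompose_mul_left_apply 𝒜 (SetLike.coe_mem _)]
    split_ifs with h
    · have h1 : (DirectSum.decompose 𝒜 a i : A)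
          ∈ (HomogeneousIdeal.irrelevant 𝒜).toIdeal ^ i :=
        satp_graded_le_pow_irr 𝒜 hstd i i le_rfl _ (SetLike.coe_mem _)
      have h2 := hx (c - i)
      have h3 := Ideal.mul_mem_mul h1 h2
      have heq : (HomogeneousIdeal.irrelevant 𝒜).toIdeal ^ i *
          (Ideal.span (Set.range f) ^ w *
            (HomogeneousIdeal.irrelevant 𝒜).toIdeal ^ (c - i - b (Fin.last s) * w))
          = Ideal.span (Set.range f) ^ w *
            (HomogeneousIdeal.irrelevant 𝒜).toIdeal ^
              (i + (c - i - b (Fin.last s) * w)) := by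
        rw [pow_add]; ring
      rw [heq] at h3
      refine Ideal.mul_mono_right (Ideal.pow_le_pow_right (by omega)) h3
    · exact zero_mem _

/-- Uniform bound extraction over a finite set for monotone-in-`B` predicates. -/
theorem satp_exists_unif {α : Type*} (G : Finset α) (Q : α → ℕ → Prop)
    (hmono : ∀ a B B', B ≤ B' → Q a B → Q a B') (hex : ∀ a ∈ G, ∃ B, Q a B) :
    ∃ B, ∀ a ∈ G, Q a B := by
  classical
  induction G using Finset.induction with
  | empty => exact ⟨0, by simp⟩
  | @insert a G ha ih =>
    obtain ⟨B1, h1⟩ := hex a (Finset.mem_insert_self a G)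
    obtain ⟨B2, h2⟩ := ih fun x hx => hex x (Finset.mem_insert_of_mem hx)
    refine ⟨max B1 B2, fun x hx => ?_⟩
    rcases Finset.mem_insert.mp hx with rfl | hx
    · exact hmono x B1 _ (le_max_left _ _) h1
    · exact hmono x B2 _ (le_max_right _ _) (h2 x hx)

/-- Key per-homogeneous-component estimate. -/
theorem satp_term_hom (hstd : ∀ n, 𝒜 (n + 1) = 𝒜 1 * 𝒜 n) (hmono : Monotone b)
    (hfdeg : ∀ i, f i ∈ 𝒜 (b i)) {y : A} {lam d : ℕ} {a : A} (had : a ∈ 𝒜 d)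
    (ha : a ∈ satC (Ideal.span (Set.range f)) (HomogeneousIdeal.irrelevant 𝒜).toIdeal y lam) :
    ∃ B : ℕ, ∀ w u : ℕ, ∀ r ∈ Ideal.span (Set.range f) ^ w,
      b (Fin.last s) * (w + lam) + B ≤ u →
      (DirectSum.decompose 𝒜 (r * a) u : A) ∈ satY (Ideal.span (Set.range f)) y (w + lam) := by
  have ha2 := (Submodule.mem_inf.mp ha).2
  obtain ⟨h, hh, hhy⟩ := ha2
  simp only [LinearMap.mulLeft_apply] at hhy
  obtain ⟨N, hN⟩ := satp_mem_sat_iff.mp hh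
  refine ⟨N + d, fun w u r hr hu => ?_⟩
  have hmulexp : b (Fin.last s) * (w + lam) = b (Fin.last s) * w + b (Fin.last s) * lam :=
    Nat.mul_add _ _ _
  rw [satp_decompose_mul_right_apply 𝒜 had, if_pos (by omega : d ≤ u)]
  have hρ : (DirectSum.decompose 𝒜 r (u - d) : A) ∈ Ideal.span (Set.range f) ^ w *
      (HomogeneousIdeal.irrelevant 𝒜).toIdeal ^ N := by
    have h1 := satp_proj_pow_mem 𝒜 f b hstd hmono hfdeg w r hr (u - d)
    exact Ideal.mul_mono_right (Ideal.pow_le_pow_right (by omega)) h1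
  have H : ∀ ρ ∈ Ideal.span (Set.range f) ^ w * (HomogeneousIdeal.irrelevant 𝒜).toIdeal ^ N,
      ρ * a ∈ satY (Ideal.span (Set.range f)) y (w + lam) := by
    intro ρ hρ'
    refine Submodule.mul_induction_on hρ' (fun t ht z hz => ?_) (fun x1 x2 hx1 hx2 => ?_)
    · refine Submodule.mem_map.mpr ⟨t * (h * z), ?_, ?_⟩
      · rw [pow_add]
        exact Ideal.mul_mem_mul ht (Submodule.mem_colon.mp hN z hz)
      · simp only [LinearMap.mulLeft_apply]
        rw [← hhy]; ring
    · rw [add_mul]; exact add_mem hx1 hx2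
  exact H _ hρ

/-- Per-level estimate for an arbitrary element of `C_lam`. -/
theorem satp_term (hstd : ∀ n, 𝒜 (n + 1) = 𝒜 1 * 𝒜 n) (hmono : Monotone b)
    (hfdeg : ∀ i, f i ∈ 𝒜 (b i)) {y : A} (hy1 : y ∈ 𝒜 1) {lam : ℕ} {a : A}
    (ha : a ∈ satC (Ideal.span (Set.range f)) (HomogeneousIdeal.irrelevant 𝒜).toIdeal y lam) :
    ∃ B : ℕ, ∀ w u : ℕ, ∀ r ∈ Ideal.span (Set.range f) ^ w,
      b (Fin.last s) * (w + lam) + B ≤ u →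
      (DirectSum.decompose 𝒜 (r * a) u : A) ∈ satY (Ideal.span (Set.range f)) y (w + lam) := by
  classical
  have hIhom : (Ideal.span (Set.range f)).IsHomogeneous 𝒜 :=
    Ideal.homogeneous_span 𝒜 _ (by rintro x ⟨i, rfl⟩; exact ⟨b i, hfdeg i⟩)
  have hCcomp : ∀ c : ℕ, (DirectSum.decompose 𝒜 a c : A)
      ∈ satC (Ideal.span (Set.range f)) (HomogeneousIdeal.irrelevant 𝒜).toIdeal y lam := by
    intro c
    obtain ⟨ha1, ha2⟩ := Submodule.mem_inf.mp ha
    refine Submodule.mem_inf.mpr ⟨satp_isHomogeneous_pow 𝒜 hIhom lam c ha1, ?_⟩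
    obtain ⟨h, hh, hhy⟩ := ha2
    simp only [LinearMap.mulLeft_apply] at hhy
    rw [← hhy, satp_decompose_mul_left_apply 𝒜 hy1]
    split_ifs with hc
    · exact Submodule.mem_map.mpr ⟨_, satp_isHomogeneous_sat 𝒜
        (satp_isHomogeneous_pow 𝒜 hIhom lam) (c - 1) hh, rfl⟩
    · exact zero_mem _
  have hP : (fun x : A => x ∈ satC (Ideal.span (Set.range f))
        (HomogeneousIdeal.irrelevant 𝒜).toIdeal y lam ∧
      ∃ B : ℕ, ∀ w u : ℕ, ∀ r ∈ Ideal.span (Set.range f) ^ w,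
        b (Fin.last s) * (w + lam) + B ≤ u →
        (DirectSum.decompose 𝒜 (r * x) u : A) ∈ satY (Ideal.span (Set.range f)) y (w + lam))
      (∑ c ∈ (DirectSum.decompose 𝒜 a).support, (DirectSum.decompose 𝒜 a c : A)) := by
    refine Finset.sum_induction _ (fun x : A => x ∈ satC (Ideal.span (Set.range f))
        (HomogeneousIdeal.irrelevant 𝒜).toIdeal y lam ∧
      ∃ B : ℕ, ∀ w u : ℕ, ∀ r ∈ Ideal.span (Set.range f) ^ w,
        b (Fin.last s) * (w + lam) + B ≤ u →
        (DirectSum.decompose 𝒜 (r * x) u : A) ∈ satY (Ideal.span (Set.range f)) y (w + lam))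
      ?_ ?_ ?_
    · rintro x1 x2 ⟨hm1, B1, h1⟩ ⟨hm2, B2, h2⟩
      refine ⟨add_mem hm1 hm2, max B1 B2, fun w u r hr hu => ?_⟩
      rw [mul_add, DirectSum.decompose_add, DirectSum.add_apply, Submodule.coe_add]
      exact add_mem (h1 w u r hr (by omega)) (h2 w u r hr (by omega))
    · refine ⟨zero_mem _, 0, fun w u r hr hu => ?_⟩
      rw [mul_zero, DirectSum.decompose_zero, DirectSum.zero_apply, ZeroMemClass.coe_zero]
      exact zero_mem _
    · intro i _
      exact ⟨hCcomp i, satp_term_hom 𝒜 f b hstd hmono hfdeg (SetLike.coe_mem _) (hCcomp i)⟩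
  rw [DirectSum.sum_support_decompose 𝒜 a] at hP
  exact hP.2

/-- Per-generator estimate. -/
theorem satp_perGen (hstd : ∀ n, 𝒜 (n + 1) = 𝒜 1 * 𝒜 n) (hmono : Monotone b)
    (hfdeg : ∀ i, f i ∈ 𝒜 (b i)) {y : A} (hy1 : y ∈ 𝒜 1)
    (g : ↥(reesAlgebra (Ideal.span (Set.range f))))
    (hg : ∀ v : ℕ, ((g : Polynomial A).coeff v)
      ∈ satC (Ideal.span (Set.range f)) (HomogeneousIdeal.irrelevant 𝒜).toIdeal y v) :
    ∃ B : ℕ, ∀ v u : ℕ, ∀ q : ↥(reesAlgebra (Ideal.span (Set.range f))),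
      b (Fin.last s) * v + B ≤ u →
      (DirectSum.decompose 𝒜
          (((q * g : ↥(reesAlgebra (Ideal.span (Set.range f)))) : Polynomial A).coeff v) u : A)
        ∈ satY (Ideal.span (Set.range f)) y v := by
  classical
  obtain ⟨B, hB⟩ := satp_exists_unif (Finset.range ((g : Polynomial A).natDegree + 1))
    (fun lam B => ∀ w u : ℕ, ∀ r ∈ Ideal.span (Set.range f) ^ w,
      b (Fin.last s) * (w + lam) + B ≤ u →
      (DirectSum.decompose 𝒜 (r * (g : Polynomial A).coeff lam) u : A)
        ∈ satY (Ideal.span (Set.range f)) y (w + lam))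
    (fun lam B B' hBB hq w u r hr hu => hq w u r hr (by omega))
    (fun lam _ => satp_term 𝒜 f b hstd hmono hfdeg hy1 (hg lam))
  refine ⟨B, fun v u q hu => ?_⟩
  have hcoe : ((q * g : ↥(reesAlgebra (Ideal.span (Set.range f)))) : Polynomial A)
      = (q : Polynomial A) * (g : Polynomial A) := rfl
  rw [hcoe, Polynomial.coeff_mul, DirectSum.decompose_sum, DFinsupp.finset_sum_apply,
    Submodule.coe_sum]
  refine Submodule.sum_mem _ fun x hx => ?_
  have hxv := Finset.HasAntidiagonal.mem_antidiagonal.mp hx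
  have hmulexp : b (Fin.last s) * (x.1 + x.2) = b (Fin.last s) * v := by rw [hxv]
  by_cases hlam : x.2 ≤ (g : Polynomial A).natDegree
  · have := hB x.2 (Finset.mem_range.mpr (by omega)) x.1 u ((q : Polynomial A).coeff x.1)
      ((mem_reesAlgebra_iff _ _).mp q.2 x.1) (by omega)
    rwa [hxv] at this
  · have h0 : (g : Polynomial A).coeff x.2 = 0 :=
      Polynomial.coeff_eq_zero_of_natDegree_lt (by omega)
    rw [h0, mul_zero, DirectSum.decompose_zero, DirectSum.zero_apply, ZeroMemClass.coe_zero]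
    exact zero_mem _

/-- Main uniform vanishing statement. -/
theorem satp_main [IsNoetherianRing A] (hstd : ∀ n, 𝒜 (n + 1) = 𝒜 1 * 𝒜 n) (hmono : Monotone b)
    (hfdeg : ∀ i, f i ∈ 𝒜 (b i)) {y : A} (hy1 : y ∈ 𝒜 1) :
    ∃ u₀ : ℕ, ∀ v u : ℕ, b (Fin.last s) * v + u₀ ≤ u → ∀ ξ : A,
      ξ ∈ satC (Ideal.span (Set.range f)) (HomogeneousIdeal.irrelevant 𝒜).toIdeal y v →
      ξ ∈ 𝒜 u → ξ ∈ satY (Ideal.span (Set.range f)) y v := by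
  classical
  obtain ⟨G, hG⟩ := IsNoetherian.noetherian
    (satM (Ideal.span (Set.range f)) (HomogeneousIdeal.irrelevant 𝒜).toIdeal y)
  have hgm : ∀ g ∈ G, ∀ v : ℕ, ((g : Polynomial A).coeff v)
      ∈ satC (Ideal.span (Set.range f)) (HomogeneousIdeal.irrelevant 𝒜).toIdeal y v :=
    fun g hg => satp_mem_satM.mp (hG ▸ Ideal.subset_span hg)
  obtain ⟨u₀, hu₀⟩ := satp_exists_unif G
    (fun g B => ∀ v u : ℕ, ∀ q : ↥(reesAlgebra (Ideal.span (Set.range f))),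
      b (Fin.last s) * v + B ≤ u →
      (DirectSum.decompose 𝒜
          (((q * g : ↥(reesAlgebra (Ideal.span (Set.range f)))) : Polynomial A).coeff v) u : A)
        ∈ satY (Ideal.span (Set.range f)) y v)
    (fun g B B' hBB hq v u q hu => hq v u q (by omega))
    (fun g hgG => satp_perGen 𝒜 f b hstd hmono hfdeg hy1 g (hgm g hgG))
  refine ⟨u₀, fun v u hu ξ hξC hξdeg => ?_⟩
  have hpR : (Polynomial.monomial v ξ : Polynomial A)
      ∈ reesAlgebra (Ideal.span (Set.range f)) := by
    intro i
    rw [Polynomial.coeff_monomial]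
    split_ifs with h
    · rw [← h]; exact (Submodule.mem_inf.mp hξC).1
    · exact zero_mem _
  set p : ↥(reesAlgebra (Ideal.span (Set.range f))) := ⟨_, hpR⟩ with hp
  have hpM : p ∈ satM (Ideal.span (Set.range f)) (HomogeneousIdeal.irrelevant 𝒜).toIdeal y := by
    rw [satp_mem_satM]
    intro i
    show (Polynomial.monomial v ξ).coeff i ∈ _
    rw [Polynomial.coeff_monomial]
    split_ifs with h
    · rw [← h]; exact hξC
    · exact zero_mem _
  rw [← hG] at hpM
  obtain ⟨F, -, hF⟩ := Submodule.mem_span_finset.mp hpM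
  have hcoe : (p : Polynomial A) = ∑ g ∈ G,
      ((F g * g : ↥(reesAlgebra (Ideal.span (Set.range f)))) : Polynomial A) := by
    calc (p : Polynomial A) = (reesAlgebra (Ideal.span (Set.range f))).val p := rfl
      _ = ∑ g ∈ G, (reesAlgebra (Ideal.span (Set.range f))).val (F g • g) := by
          rw [← hF, map_sum]
      _ = _ := rfl
  have hξeq : ξ = (DirectSum.decompose 𝒜 ((p : Polynomial A).coeff v) u : A) := by
    have hcv : (p : Polynomial A).coeff v = ξ := by
      show (Polynomial.monomial v ξ).coeff v = ξ
      rw [Polynomial.coeff_monomial, if_pos rfl]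
    rw [hcv, DirectSum.decompose_of_mem_same 𝒜 hξdeg]
  rw [hξeq, hcoe, Polynomial.finset_sum_coeff, DirectSum.decompose_sum,
    DFinsupp.finset_sum_apply, Submodule.coe_sum]
  exact Submodule.sum_mem _ fun g hgG => hu₀ g hgG v u (F g) hu

/-- Existence of a nonzero element of degree one. -/
theorem satp_exists_y [Nontrivial A] (h0 : 𝒜 0 = 1) (hstd : ∀ n, 𝒜 (n + 1) = 𝒜 1 * 𝒜 n)
    (hdim : 2 ≤ ringKrullDim A) : ∃ y : A, y ∈ 𝒜 1 ∧ y ≠ 0 := by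
  classical
  by_contra hcon
  push_neg at hcon
  have h1 : ∀ n : ℕ, n ≠ 0 → ∀ x ∈ 𝒜 n, x = (0 : A) := by
    intro n hn
    obtain ⟨n', rfl⟩ : ∃ n', n = n' + 1 := ⟨n - 1, by omega⟩
    intro x hx
    rw [hstd] at hx
    have hb : 𝒜 1 * 𝒜 n' ≤ (⊥ : Submodule k A) := by
      rw [Submodule.mul_le]
      intro a haa z hz
      rw [hcon a haa, zero_mul]
      exact zero_mem _
    simpa using hb hx
  have hsurj : Function.Surjective (algebraMap k A) := by
    intro a
    have ha0 : a ∈ 𝒜 0 := by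
      rw [← DirectSum.sum_support_decompose 𝒜 a]
      refine Submodule.sum_mem _ fun j _ => ?_
      rcases eq_or_ne j 0 with rfl | hj
      · exact SetLike.coe_mem _
      · rw [h1 j hj _ (SetLike.coe_mem _)]
        exact zero_mem _
    rw [h0] at ha0
    exact Submodule.mem_one.mp ha0
  have hle := ringKrullDim_le_of_surjective (algebraMap k A) hsurj
  rw [ringKrullDim_eq_zero_of_field k] at hle
  have hcontra : (2 : WithBot ℕ∞) ≤ 0 := le_trans hdim hle
  norm_num at hcontra

/-- Standard graded with f.g. degree-one part implies Noetherian. -/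
theorem satp_noetherian (h0 : 𝒜 0 = 1) (hstd : ∀ n, 𝒜 (n + 1) = 𝒜 1 * 𝒜 n)
    (hfg : (𝒜 1).FG) : IsNoetherianRing A := by
  classical
  obtain ⟨S, hS⟩ := hfg
  have hadj : ∀ n : ℕ, ∀ x ∈ 𝒜 n, x ∈ Algebra.adjoin k (↑S : Set A) := by
    intro n
    induction n with
    | zero =>
      intro x hx
      rw [h0] at hx
      obtain ⟨c, rfl⟩ := Submodule.mem_one.mp hx
      exact Subalgebra.algebraMap_mem _ c
    | succ n ih =>
      intro x hx
      rw [hstd] at hx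
      have hle : 𝒜 1 * 𝒜 n ≤ Subalgebra.toSubmodule (Algebra.adjoin k (↑S : Set A)) := by
        rw [Submodule.mul_le]
        intro a ha z hz
        have ha' : a ∈ Algebra.adjoin k (↑S : Set A) := by
          have hsp : Submodule.span k (↑S : Set A)
              ≤ Subalgebra.toSubmodule (Algebra.adjoin k (↑S : Set A)) :=
            Submodule.span_le.mpr Algebra.subset_adjoin
          rw [← hS] at ha
          exact hsp ha
        exact Subalgebra.mul_mem _ ha' (ih z hz)
      exact hle hx
  have htop : Algebra.adjoin k (↑S : Set A) = ⊤ := by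
    rw [eq_top_iff]
    intro a _
    rw [← DirectSum.sum_support_decompose 𝒜 a]
    exact Subalgebra.sum_mem _ fun j _ => hadj j _ (SetLike.coe_mem _)
  have hft : Algebra.FiniteType k A := ⟨⟨S, htop⟩⟩
  exact Algebra.FiniteType.isNoetherianRing k A

end SatMain

/-- Let `R` be a standard graded finitely generated domain over a field `k`
with `dim R ≥ 2`, `m` the irrelevant ideal, and `I` a nonzero homogeneous ideal which is not
`m`-primary, minimally generated by homogeneous elements `f₀, …, f_s` of degrees
`b₀ ≤ ⋯ ≤ b_s`. Then there is `u₀ ≥ 0` such that for all `v ≥ 0` and all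
`u ≥ b_s·v + u₀`, the degree-`u` components of `(I^v : m^∞)` and of `I^v` coincide. -/
theorem sat_pow_eq_pow_in_large_degrees
    (k : Type) [Field k] (A : Type) [CommRing A] [Algebra k A] [IsDomain A]
    (𝒜 : ℕ → Submodule k A) [GradedAlgebra 𝒜]
    (h0 : 𝒜 0 = 1) (hstd : ∀ n, 𝒜 (n + 1) = 𝒜 1 * 𝒜 n) (hfg : (𝒜 1).FG)
    (hdim : 2 ≤ ringKrullDim A)
    (I : Ideal A) (hne : I ≠ ⊥)
    (hnotprimary : ¬ (I.IsPrimary ∧ I.radical = (HomogeneousIdeal.irrelevant 𝒜).toIdeal))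
    (s : ℕ) (f : Fin (s + 1) → A) (b : Fin (s + 1) → ℕ) (hmono : Monotone b)
    (hfdeg : ∀ i, f i ∈ 𝒜 (b i)) (hgen : I = Ideal.span (Set.range f))
    (hmin : ∀ i, f i ∉ Ideal.span (f '' {j | j ≠ i})) :
    ∃ u₀ : ℕ, ∀ v u : ℕ, b (Fin.last s) * v + u₀ ≤ u →
      𝒜 u ⊓ (Ideal.sat (I ^ v) (HomogeneousIdeal.irrelevant 𝒜).toIdeal).restrictScalars k
        = 𝒜 u ⊓ (I ^ v).restrictScalars k := by
  classical
  subst hgen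
  haveI : IsNoetherianRing A := satp_noetherian 𝒜 h0 hstd hfg
  obtain ⟨y, hy1, hy0⟩ := satp_exists_y 𝒜 h0 hstd hdim
  obtain ⟨u₀, hmain⟩ := satp_main 𝒜 f b hstd hmono hfdeg hy1
  refine ⟨u₀, fun v u hu => ?_⟩
  have descent : ∀ (M : ℕ) (x : A), x ∈ 𝒜 u →
      x ∈ Ideal.sat (Ideal.span (Set.range f) ^ v) (HomogeneousIdeal.irrelevant 𝒜).toIdeal →
      x * y ^ M ∈ Ideal.span (Set.range f) ^ v → x ∈ Ideal.span (Set.range f) ^ v := by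
    intro M
    induction M with
    | zero => intro x _ _ h; simpa using h
    | succ M ih =>
      intro x hxu hxs hxy
      refine ih x hxu hxs ?_
      have hwsat : x * y ^ M ∈ Ideal.sat (Ideal.span (Set.range f) ^ v)
          (HomogeneousIdeal.irrelevant 𝒜).toIdeal := Ideal.mul_mem_right _ _ hxs
      have hyM : y ^ M ∈ 𝒜 M := by simpa using SetLike.pow_mem_graded M hy1
      have hwdeg : x * y ^ M ∈ 𝒜 (u + M) := SetLike.mul_mem_graded hxu hyM
      have hξC : y * (x * y ^ M) ∈ satC (Ideal.span (Set.range f))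
          (HomogeneousIdeal.irrelevant 𝒜).toIdeal y v := by
        refine Submodule.mem_inf.mpr ⟨?_, Submodule.mem_map.mpr ⟨x * y ^ M, hwsat, rfl⟩⟩
        have hre : y * (x * y ^ M) = x * y ^ (M + 1) := by ring
        rw [hre]; exact hxy
      have hξdeg : y * (x * y ^ M) ∈ 𝒜 (1 + (u + M)) := SetLike.mul_mem_graded hy1 hwdeg
      obtain ⟨z, hz, hyz⟩ := hmain v (1 + (u + M)) (by omega) _ hξC hξdeg
      simp only [LinearMap.mulLeft_apply] at hyz
      have hzeq : z = x * y ^ M := mul_left_cancel₀ hy0 hyz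
      rwa [← hzeq]
  apply le_antisymm
  · intro x hx
    obtain ⟨hxu, hxs⟩ := Submodule.mem_inf.mp hx
    have hxs' : x ∈ Ideal.sat (Ideal.span (Set.range f) ^ v)
        (HomogeneousIdeal.irrelevant 𝒜).toIdeal := hxs
    obtain ⟨M, hM⟩ := satp_mem_sat_iff.mp hxs'
    have hyMm : y ^ M ∈ (HomogeneousIdeal.irrelevant 𝒜).toIdeal ^ M :=
      Ideal.pow_mem_pow (satp_mem_irr 𝒜 one_ne_zero hy1) M
    have hxy : x * y ^ M ∈ Ideal.span (Set.range f) ^ v := Submodule.mem_colon.mp hM _ hyMm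
    exact Submodule.mem_inf.mpr ⟨hxu, descent M x hxu hxs' hxy⟩
  · intro x hx
    obtain ⟨hxu, hxI⟩ := Submodule.mem_inf.mp hx
    exact Submodule.mem_inf.mpr ⟨hxu, satp_le_sat _ _ hxI⟩
end

section
/- Let k be an algebraically closed field with char k ≠ 2, let R = k[X,Y,Z]/(XY − Z^2) with homogeneous maximal ideal m = (x,y,z), and let P = (x,z), which is a prime ideal of R. Then for every integer v > 0, the saturation of P^{2v} is the principal ideal (x^v); that is, (P^{2v} :_R m^∞) = (x^v). -/
open Filter IsLocalRing

set_option maxHeartbeats 1000000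
set_option synthInstance.maxHeartbeats 1000000

/-- The defining ideal `(XY - Z²)` of the quadric cone in `k[X, Y, Z]`. -/
noncomputable def quadricRel (k : Type) [Field k] : Ideal (MvPolynomial (Fin 3) k) :=
  Ideal.span {MvPolynomial.X 0 * MvPolynomial.X 1 - MvPolynomial.X 2 ^ 2}

/-- The images `x, y, z` of `X, Y, Z` in `R = k[X,Y,Z]/(XY - Z²)`. -/
noncomputable def quadricX (k : Type) [Field k] (j : Fin 3) :
    MvPolynomial (Fin 3) k ⧸ quadricRel k :=
  Ideal.Quotient.mk (quadricRel k) (MvPolynomial.X j)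

namespace QuadricAux

open Polynomial

variable (k : Type) [Field k]

/-- The relation polynomial `X² - x·y` in `(k[x,y])[X]`. -/
noncomputable def qp : Polynomial (MvPolynomial (Fin 2) k) :=
  Polynomial.X ^ 2 - Polynomial.C (MvPolynomial.X 0 * MvPolynomial.X 1)

lemma qp_monic : (qp k).Monic := by
  refine Polynomial.monic_X_pow_sub ?_
  exact lt_of_le_of_lt (Polynomial.degree_C_le) (by norm_num)

lemma qp_degree : (qp k).degree = 2 :=
  Polynomial.degree_X_pow_sub_C (by norm_num) _

lemma lin_indep (e f : MvPolynomial (Fin 2) k)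
    (h : Ideal.Quotient.mk (Ideal.span {qp k}) (Polynomial.C e + Polynomial.C f * Polynomial.X)
      = 0) : e = 0 ∧ f = 0 := by
  rw [Ideal.Quotient.eq_zero_iff_mem, Ideal.mem_span_singleton] at h
  have h2 : (Polynomial.C e + Polynomial.C f * Polynomial.X :
      Polynomial (MvPolynomial (Fin 2) k)) = 0 := by
    refine Polynomial.eq_zero_of_dvd_of_degree_lt h ?_
    rw [qp_degree]
    calc Polynomial.degree (Polynomial.C e + Polynomial.C f * Polynomial.X) ≤ 1 := by
          rw [add_comm]; exact Polynomial.degree_linear_le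
      _ < 2 := by norm_num
  constructor
  · have := congrArg (fun q => Polynomial.coeff q 0) h2; simpa using this
  · have := congrArg (fun q => Polynomial.coeff q 1) h2; simpa using this

lemma repr' (w : Polynomial (MvPolynomial (Fin 2) k) ⧸ Ideal.span {qp k}) :
    ∃ e f, w = Ideal.Quotient.mk (Ideal.span {qp k})
      (Polynomial.C e + Polynomial.C f * Polynomial.X) := by
  obtain ⟨g, rfl⟩ := Ideal.Quotient.mk_surjective w
  set r := g %ₘ qp k with hr
  refine ⟨r.coeff 0, r.coeff 1, ?_⟩
  have h1 : Ideal.Quotient.mk (Ideal.span {qp k}) g = Ideal.Quotient.mk _ r := by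
    rw [Ideal.Quotient.eq, Ideal.mem_span_singleton]
    exact ⟨g /ₘ qp k, by linear_combination (Polynomial.modByMonic_add_div g (qp k)).symm⟩
  have hdeg : r.natDegree ≤ 1 := by
    by_cases h0 : r = 0
    · simp [h0]
    · have hlt := Polynomial.degree_modByMonic_lt g (qp_monic k)
      rw [qp_degree] at hlt
      have : r.natDegree < 2 := (Polynomial.natDegree_lt_iff_degree_lt h0).2 (by exact_mod_cast hlt)
      omega
  rw [h1]
  congr 1
  have h2 := Polynomial.eq_X_add_C_of_natDegree_le_one hdeg
  linear_combination h2

lemma prime_X0 : Prime (MvPolynomial.X 0 : MvPolynomial (Fin 2) k) := by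
  rw [← MulEquiv.prime_iff (MvPolynomial.finSuccEquiv k 1).toRingEquiv.toMulEquiv]
  have : (MvPolynomial.finSuccEquiv k 1).toRingEquiv.toMulEquiv (MvPolynomial.X 0)
      = Polynomial.X := by
    exact MvPolynomial.finSuccEquiv_X_zero
  rw [this]
  exact Polynomial.prime_X

lemma not_dvd_X0_X1 : ¬ (MvPolynomial.X 0 : MvPolynomial (Fin 2) k) ∣ MvPolynomial.X 1 := by
  rintro ⟨c, hc⟩
  have := congrArg (MvPolynomial.eval ![0, 1]) hc
  simp at this

lemma key (v : ℕ) (w : Polynomial (MvPolynomial (Fin 2) k) ⧸ Ideal.span {qp k})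
    (h : Ideal.Quotient.mk (Ideal.span {qp k}) (Polynomial.C (MvPolynomial.X 0 ^ v)) ∣
      Ideal.Quotient.mk (Ideal.span {qp k}) (Polynomial.C (MvPolynomial.X 1)) * w) :
    Ideal.Quotient.mk (Ideal.span {qp k}) (Polynomial.C (MvPolynomial.X 0 ^ v)) ∣ w := by
  obtain ⟨u, hu⟩ := h
  obtain ⟨e, f, rfl⟩ := repr' k w
  obtain ⟨e', f', rfl⟩ := repr' k u
  have heq : Ideal.Quotient.mk (Ideal.span {qp k})
      (Polynomial.C (MvPolynomial.X 1 * e - MvPolynomial.X 0 ^ v * e')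
        + Polynomial.C (MvPolynomial.X 1 * f - MvPolynomial.X 0 ^ v * f') * Polynomial.X) = 0 := by
    have hpoly : Polynomial.C (MvPolynomial.X 1 * e - MvPolynomial.X 0 ^ v * e')
        + Polynomial.C (MvPolynomial.X 1 * f - MvPolynomial.X 0 ^ v * f') * Polynomial.X
        = Polynomial.C (MvPolynomial.X 1) * (Polynomial.C e + Polynomial.C f * Polynomial.X)
          - Polynomial.C (MvPolynomial.X 0 ^ v)
            * (Polynomial.C e' + Polynomial.C f' * Polynomial.X) := by
      simp only [map_sub, map_mul]
      ring
    rw [hpoly, map_sub, map_mul, map_mul, hu]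
    ring
  obtain ⟨he, hf⟩ := lin_indep k _ _ heq
  have he' : MvPolynomial.X 0 ^ v ∣ MvPolynomial.X 1 * e := ⟨e', by linear_combination he⟩
  have hf' : MvPolynomial.X 0 ^ v ∣ MvPolynomial.X 1 * f := ⟨f', by linear_combination hf⟩
  obtain ⟨e'', rfl⟩ := (prime_X0 k).pow_dvd_of_dvd_mul_left v (not_dvd_X0_X1 k) he'
  obtain ⟨f'', rfl⟩ := (prime_X0 k).pow_dvd_of_dvd_mul_left v (not_dvd_X0_X1 k) hf'
  refine ⟨Ideal.Quotient.mk _ (Polynomial.C e'' + Polynomial.C f'' * Polynomial.X), ?_⟩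
  rw [← map_mul]
  congr 1
  simp only [map_mul]
  ring

/-- The coordinate change `k[X,Y,Z] ≃ (k[x,y])[Z]` sending `X ↦ C x`, `Y ↦ C y`, `Z ↦ Z`. -/
noncomputable def E : MvPolynomial (Fin 3) k ≃+* Polynomial (MvPolynomial (Fin 2) k) :=
  ((MvPolynomial.renameEquiv k (finRotate 3)).trans (MvPolynomial.finSuccEquiv k 2)).toRingEquiv

lemma E_X0 : E k (MvPolynomial.X 0) = Polynomial.C (MvPolynomial.X 0) := by
  show (MvPolynomial.finSuccEquiv k 2) (MvPolynomial.rename (finRotate 3) (MvPolynomial.X 0))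
    = Polynomial.C (MvPolynomial.X 0)
  rw [MvPolynomial.rename_X]
  have h1 : finRotate 3 (0 : Fin 3) = Fin.succ 0 := by decide
  rw [h1, MvPolynomial.finSuccEquiv_X_succ]

lemma E_X1 : E k (MvPolynomial.X 1) = Polynomial.C (MvPolynomial.X 1) := by
  show (MvPolynomial.finSuccEquiv k 2) (MvPolynomial.rename (finRotate 3) (MvPolynomial.X 1))
    = Polynomial.C (MvPolynomial.X 1)
  rw [MvPolynomial.rename_X]
  have h1 : finRotate 3 (1 : Fin 3) = Fin.succ 1 := by decide
  rw [h1, MvPolynomial.finSuccEquiv_X_succ]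

lemma E_X2 : E k (MvPolynomial.X 2) = Polynomial.X := by
  show (MvPolynomial.finSuccEquiv k 2) (MvPolynomial.rename (finRotate 3) (MvPolynomial.X 2))
    = Polynomial.X
  rw [MvPolynomial.rename_X]
  have h1 : finRotate 3 (2 : Fin 3) = 0 := by decide
  rw [h1, MvPolynomial.finSuccEquiv_X_zero]

lemma hmap : Ideal.span {qp k} = (quadricRel k).map (E k : MvPolynomial (Fin 3) k →+* _) := by
  rw [quadricRel, Ideal.map_span, Set.image_singleton]
  have h : (E k : MvPolynomial (Fin 3) k →+* _)
      (MvPolynomial.X 0 * MvPolynomial.X 1 - MvPolynomial.X 2 ^ 2) = -(qp k) := by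
    show E k (MvPolynomial.X 0 * MvPolynomial.X 1 - MvPolynomial.X 2 ^ 2) = -(qp k)
    rw [map_sub, map_mul, map_pow, E_X0, E_X1, E_X2, qp]
    rw [← Polynomial.C_mul]
    ring
  rw [h, Ideal.span_singleton_neg]

/-- The isomorphism `R ≃ (k[x,y])[Z]/(Z² - xy)`. -/
noncomputable def Phi : (MvPolynomial (Fin 3) k ⧸ quadricRel k) ≃+*
    Polynomial (MvPolynomial (Fin 2) k) ⧸ Ideal.span {qp k} :=
  Ideal.quotientEquiv _ _ (E k) (hmap k)

lemma Phi_x : Phi k (quadricX k 0)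
    = Ideal.Quotient.mk (Ideal.span {qp k}) (Polynomial.C (MvPolynomial.X 0)) := by
  show Phi k (Ideal.Quotient.mk _ (MvPolynomial.X 0)) = _
  rw [Phi, Ideal.quotientEquiv_mk, E_X0]

lemma Phi_y : Phi k (quadricX k 1)
    = Ideal.Quotient.mk (Ideal.span {qp k}) (Polynomial.C (MvPolynomial.X 1)) := by
  show Phi k (Ideal.Quotient.mk _ (MvPolynomial.X 1)) = _
  rw [Phi, Ideal.quotientEquiv_mk, E_X1]

lemma keyR_one (v : ℕ) (t : MvPolynomial (Fin 3) k ⧸ quadricRel k)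
    (h : quadricX k 0 ^ v ∣ quadricX k 1 * t) : quadricX k 0 ^ v ∣ t := by
  have h2 := map_dvd (Phi k) h
  rw [map_mul, map_pow, Phi_x, Phi_y] at h2
  have h3 : Ideal.Quotient.mk (Ideal.span {qp k}) (Polynomial.C (MvPolynomial.X 0 ^ v)) ∣
      Ideal.Quotient.mk (Ideal.span {qp k}) (Polynomial.C (MvPolynomial.X 1)) * Phi k t := by
    simpa only [map_pow] using h2
  have h4 := key k v (Phi k t) h3
  have h5 : (Phi k) (quadricX k 0 ^ v) ∣ Phi k t := by
    rw [map_pow, Phi_x]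
    simpa only [map_pow] using h4
  have h6 := map_dvd (Phi k).symm h5
  simpa using h6

lemma keyR (v i : ℕ) (t : MvPolynomial (Fin 3) k ⧸ quadricRel k)
    (h : quadricX k 0 ^ v ∣ quadricX k 1 ^ i * t) : quadricX k 0 ^ v ∣ t := by
  induction i generalizing t with
  | zero => simpa using h
  | succ n ih =>
    apply keyR_one
    apply ih
    rw [show quadricX k 1 ^ n * (quadricX k 1 * t) = quadricX k 1 ^ (n+1) * t by ring]
    exact h

/-- the substitution `X ↦ 0`, `Z ↦ 0` on `k[X,Y,Z]`. -/
noncomputable def psi : MvPolynomial (Fin 3) k →+* MvPolynomial (Fin 3) k :=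
  (MvPolynomial.aeval ![0, MvPolynomial.X 1, 0]).toRingHom

lemma psi_X0 : psi k (MvPolynomial.X 0) = 0 := by simp [psi]
lemma psi_X1 : psi k (MvPolynomial.X 1) = MvPolynomial.X 1 := by simp [psi]
lemma psi_X2 : psi k (MvPolynomial.X 2) = 0 := by simp [psi]

lemma mem_I_iff (f : MvPolynomial (Fin 3) k) :
    f ∈ Ideal.span {MvPolynomial.X 0, MvPolynomial.X 2} ↔ psi k f = 0 := by
  set I : Ideal (MvPolynomial (Fin 3) k) := Ideal.span {MvPolynomial.X 0, MvPolynomial.X 2} with hI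
  have hcongr : (Ideal.Quotient.mk I).comp (psi k) = Ideal.Quotient.mk I := by
    apply MvPolynomial.ringHom_ext
    · intro a
      simp [psi]
    · intro i
      fin_cases i
      · rw [RingHom.comp_apply]
        rw [show ((⟨0, by norm_num⟩ : Fin 3)) = (0 : Fin 3) from rfl, psi_X0]
        rw [map_zero]
        symm
        rw [Ideal.Quotient.eq_zero_iff_mem]
        exact Ideal.subset_span (by simp)
      · rw [RingHom.comp_apply]
        rw [show ((⟨1, by norm_num⟩ : Fin 3)) = (1 : Fin 3) from rfl, psi_X1]
      · rw [RingHom.comp_apply]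
        rw [show ((⟨2, by norm_num⟩ : Fin 3)) = (2 : Fin 3) from rfl, psi_X2]
        rw [map_zero]
        symm
        rw [Ideal.Quotient.eq_zero_iff_mem]
        exact Ideal.subset_span (by simp)
  constructor
  · intro hf
    have : psi k f ∈ I.map (psi k) := Ideal.mem_map_of_mem _ hf
    rw [hI, Ideal.map_span] at this
    have himg : (psi k) '' {MvPolynomial.X 0, MvPolynomial.X 2} ⊆ {0} := by
      rintro t ⟨s, hs, rfl⟩
      rcases hs with rfl | rfl
      · simp [psi_X0]
      · simp [psi_X2]
    have h2 := Ideal.span_mono himg this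
    exact zero_dvd_iff.1 (Ideal.mem_span_singleton.1 h2)
  · intro hf
    have h1 : Ideal.Quotient.mk I (psi k f) = Ideal.Quotient.mk I f :=
      congrFun (congrArg DFunLike.coe hcongr) f
    rw [hf, map_zero] at h1
    rw [← Ideal.Quotient.eq_zero_iff_mem, ← h1]

lemma I_prime : (Ideal.span {MvPolynomial.X 0, MvPolynomial.X 2} :
    Ideal (MvPolynomial (Fin 3) k)).IsPrime := by
  have : (Ideal.span {MvPolynomial.X 0, MvPolynomial.X 2} :
      Ideal (MvPolynomial (Fin 3) k)) = RingHom.ker (psi k) := by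
    ext f
    rw [mem_I_iff, RingHom.mem_ker]
  rw [this]
  exact RingHom.ker_isPrime _

lemma P_prime : (Ideal.span {quadricX k 0, quadricX k 2}).IsPrime := by
  have hP : Ideal.span {quadricX k 0, quadricX k 2}
      = Ideal.map (Ideal.Quotient.mk (quadricRel k))
        (Ideal.span {MvPolynomial.X 0, MvPolynomial.X 2}) := by
    rw [Ideal.map_span, Set.image_insert_eq, Set.image_singleton]
    rfl
  rw [hP]
  have := I_prime k
  refine Ideal.map_isPrime_of_surjective Ideal.Quotient.mk_surjective ?_
  rw [Ideal.mk_ker, quadricRel, Ideal.span_le]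
  intro g hg
  rw [Set.mem_singleton_iff] at hg
  subst hg
  refine sub_mem ?_ ?_
  · exact Ideal.mul_mem_right _ _ (Ideal.subset_span (by simp))
  · rw [sq]
    exact Ideal.mul_mem_right _ _ (Ideal.subset_span (by simp))

end QuadricAux

/-- Let `k` be algebraically closed with `char k ≠ 2`,
`R = k[X,Y,Z]/(XY - Z²)` with `m = (x,y,z)`, and `P = (x,z)`, which is a prime ideal of `R`.
Then for every `v > 0` the saturation of `P^{2v}` is the principal ideal `(x^v)`. -/
theorem sat_pow_quadric_cone
    (k : Type) [Field k] [IsAlgClosed k] (hchar : (2 : k) ≠ 0) :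
    (Ideal.span {quadricX k 0, quadricX k 2}).IsPrime ∧
    ∀ v : ℕ, 0 < v →
      Ideal.sat ((Ideal.span {quadricX k 0, quadricX k 2}) ^ (2 * v))
          (Ideal.span {quadricX k 0, quadricX k 1, quadricX k 2})
        = Ideal.span {quadricX k 0 ^ v} := by
  refine ⟨QuadricAux.P_prime k, ?_⟩
  intro v hv
  set x := quadricX k 0
  set y := quadricX k 1
  set z := quadricX k 2
  set m : Ideal (MvPolynomial (Fin 3) k ⧸ quadricRel k) := Ideal.span {x, y, z} with hm
  set P : Ideal (MvPolynomial (Fin 3) k ⧸ quadricRel k) := Ideal.span {x, z} with hPdef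
  have hz2 : z * z = x * y := by
    have h0 : Ideal.Quotient.mk (quadricRel k)
        (MvPolynomial.X 0 * MvPolynomial.X 1 - MvPolynomial.X 2 ^ 2) = 0 := by
      rw [Ideal.Quotient.eq_zero_iff_mem, quadricRel]
      exact Ideal.subset_span rfl
    have h1 : x * y - z * z = 0 := by
      rw [show x * y - z * z = x * y - z ^ 2 by ring]
      rw [show x * y - z ^ 2
        = Ideal.Quotient.mk (quadricRel k)
            (MvPolynomial.X 0 * MvPolynomial.X 1 - MvPolynomial.X 2 ^ 2) by
          rw [map_sub, map_mul, map_pow]; rfl]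
      exact h0
    linear_combination -h1
  have hP2 : P * P = Ideal.span {x} * m := by
    rw [hPdef, hm, Ideal.span_mul_span', Ideal.span_mul_span']
    apply le_antisymm
    · rw [Ideal.span_le]
      rintro t ht
      rw [Set.mem_mul] at ht
      obtain ⟨a, ha, b, hb, rfl⟩ := ht
      simp only [Set.mem_insert_iff, Set.mem_singleton_iff] at ha hb
      rcases ha with rfl | rfl <;> rcases hb with rfl | rfl
      · exact Ideal.subset_span (Set.mul_mem_mul rfl (by simp))
      · exact Ideal.subset_span (Set.mul_mem_mul rfl (by simp))
      · rw [mul_comm]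
        exact Ideal.subset_span (Set.mul_mem_mul rfl (by simp))
      · rw [hz2]
        exact Ideal.subset_span (Set.mul_mem_mul rfl (by simp))
    · rw [Ideal.span_le]
      rintro t ht
      rw [Set.mem_mul] at ht
      obtain ⟨a, ha, b, hb, rfl⟩ := ht
      simp only [Set.mem_singleton_iff] at ha
      subst ha
      simp only [Set.mem_insert_iff, Set.mem_singleton_iff] at hb
      rcases hb with rfl | rfl | rfl
      · exact Ideal.subset_span (Set.mul_mem_mul (by simp) (by simp))
      · rw [← hz2]
        exact Ideal.subset_span (Set.mul_mem_mul (by simp) (by simp))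
      · exact Ideal.subset_span (Set.mul_mem_mul (by simp) (by simp))
  have hP2v : P ^ (2 * v) = Ideal.span {x ^ v} * m ^ v := by
    rw [(pow_mul P 2 v : P ^ (2 * v) = (P ^ 2) ^ v), show P ^ 2 = Ideal.span {x} * m by rw [sq]; exact hP2,
      (mul_pow (Ideal.span {x}) m v : (Ideal.span {x} * m) ^ v = Ideal.span {x} ^ v * m ^ v),
      Ideal.span_singleton_pow]
  apply le_antisymm
  · rw [Ideal.sat]
    apply iSup_le
    intro i
    intro r hr
    have hy : y ∈ m := Ideal.subset_span (by simp)
    have hyi : y ^ i ∈ m ^ i := Ideal.pow_mem_pow hy i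
    have h1 : r • y ^ i ∈ P ^ (2 * v) := Submodule.mem_colon.1 hr _ hyi
    rw [smul_eq_mul, hP2v] at h1
    have h2 : r * y ^ i ∈ Ideal.span {x ^ v} := Ideal.mul_le_left h1
    rw [Ideal.mem_span_singleton] at h2 ⊢
    exact QuadricAux.keyR k v i r (by rwa [mul_comm] at h2)
  · rw [Ideal.span_le]
    intro t ht
    rw [Set.mem_singleton_iff] at ht
    subst ht
    rw [Ideal.sat]
    have hle : Submodule.colon (P ^ (2 * v)) ((m ^ v : Ideal _) : Set _) ≤ ⨆ i : ℕ, Submodule.colon (P ^ (2 * v)) ((m ^ i : Ideal _) : Set _) :=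
      le_iSup (fun i => Submodule.colon (P ^ (2 * v)) ((m ^ i : Ideal _) : Set _)) v
    apply hle
    rw [Submodule.mem_colon]
    intro p hp
    rw [smul_eq_mul, hP2v]
    exact Ideal.mul_mem_mul (Ideal.mem_span_singleton_self _) hp
end

section
/- Let k be a field, R = k[X,Y] the standard graded polynomial ring with homogeneous maximal ideal m = (X,Y), and I = (X^2Y, XY^3, Y^5). Then the ε-multiplicity of I equals 8; that is, lim_{v→∞} λ_R((I^v :_R m^∞)/I^v)·2!/v^2 = 8. -/
open Filter IsLocalRing

set_option maxHeartbeats 1000000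
set_option synthInstance.maxHeartbeats 1000000

open MvPolynomial

namespace EpsMult

variable (k : Type) [Field k]

abbrev RR (k : Type) [Field k] := MvPolynomial (Fin 2) k

noncomputable def dd (p : ℕ × ℕ) : Fin 2 →₀ ℕ :=
  Finsupp.single 0 p.1 + Finsupp.single 1 p.2

@[simp] lemma dd_apply0 (p : ℕ × ℕ) : dd p 0 = p.1 := by
  simp [dd, Finsupp.single_apply]

@[simp] lemma dd_apply1 (p : ℕ × ℕ) : dd p 1 = p.2 := by
  simp [dd, Finsupp.single_apply]

lemma dd_pair (d : Fin 2 →₀ ℕ) : dd (d 0, d 1) = d := by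
  ext i; fin_cases i <;> simp

lemma dd_inj {p q : ℕ × ℕ} (h : dd p = dd q) : p = q := by
  have h0 := congrArg (fun f => f 0) h
  have h1 := congrArg (fun f => f 1) h
  simp only [dd_apply0, dd_apply1] at h0 h1
  exact Prod.ext h0 h1

noncomputable def mono (p : ℕ × ℕ) : RR k := monomial (dd p) 1

variable {k}

lemma mono_eq (p : ℕ × ℕ) : mono k p = X 0 ^ p.1 * X 1 ^ p.2 := by
  rw [mono, dd, X_pow_eq_monomial, X_pow_eq_monomial, monomial_mul, one_mul]

@[simp] lemma support_mono (p : ℕ × ℕ) : (mono k p).support = {dd p} := by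
  classical rw [mono, support_monomial, if_neg one_ne_zero]

variable (k)

/-- the k-subspace of polynomials supported in S -/
def kSpan (S : Set (ℕ × ℕ)) : Submodule k (RR k) where
  carrier := {f | ∀ d ∈ f.support, (d 0, d 1) ∈ S}
  add_mem' := by
    classical
    intro a b ha hb d hd
    rcases Finset.mem_union.1 (MvPolynomial.support_add hd) with h | h
    · exact ha d h
    · exact hb d h
  zero_mem' := by simp
  smul_mem' := by
    intro c f hf d hd
    exact hf d (MvPolynomial.support_smul hd)

lemma mem_kSpan {S : Set (ℕ × ℕ)} {f : RR k} :
    f ∈ kSpan k S ↔ ∀ d ∈ f.support, (d 0, d 1) ∈ S := Iff.rfl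

def UpClosed (S : Set (ℕ × ℕ)) : Prop :=
  ∀ p ∈ S, ∀ q : ℕ × ℕ, p.1 ≤ q.1 → p.2 ≤ q.2 → q ∈ S

/-- the monomial ideal attached to an upward closed set -/
def idealOf (S : Set (ℕ × ℕ)) (hS : UpClosed S) : Ideal (RR k) where
  carrier := {f | ∀ d ∈ f.support, (d 0, d 1) ∈ S}
  add_mem' := (kSpan k S).add_mem'
  zero_mem' := (kSpan k S).zero_mem'
  smul_mem' := by
    classical
    intro c f hf d hd
    rw [smul_eq_mul] at hd
    rcases Finset.mem_add.1 (MvPolynomial.support_mul c f hd) with ⟨a, ha, b, hb, rfl⟩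
    exact hS _ (hf b hb) _ (by simp) (by simp)

lemma mem_idealOf {S : Set (ℕ × ℕ)} {hS : UpClosed S} {f : RR k} :
    f ∈ idealOf k S hS ↔ ∀ d ∈ f.support, (d 0, d 1) ∈ S := Iff.rfl

variable {k}

lemma mono_mem_kSpan {S : Set (ℕ × ℕ)} {p : ℕ × ℕ} (hp : p ∈ S) :
    mono k p ∈ kSpan k S := by
  rw [mem_kSpan]
  intro d hd
  rw [support_mono, Finset.mem_singleton] at hd
  subst hd; simpa using hp

lemma mono_mem_idealOf {S : Set (ℕ × ℕ)} {hS : UpClosed S} {p : ℕ × ℕ} (hp : p ∈ S) :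
    mono k p ∈ idealOf k S hS := mono_mem_kSpan hp

lemma kSpan_le_span {S : Set (ℕ × ℕ)} {f : RR k} (hf : f ∈ kSpan k S) :
    f ∈ Submodule.span k (mono k '' S) := by
  classical
  rw [← MvPolynomial.support_sum_monomial_coeff f]
  refine Submodule.sum_mem _ fun d hd => ?_
  have he : monomial d (coeff d f) = (coeff d f) • mono k ((d 0, d 1) : ℕ × ℕ) := by
    rw [mono, dd_pair, smul_monomial, smul_eq_mul, mul_one]
  rw [he]
  exact Submodule.smul_mem _ _ (Submodule.subset_span ⟨_, hf d hd, rfl⟩)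

lemma kSpan_eq_span (S : Set (ℕ × ℕ)) :
    kSpan k S = Submodule.span k (mono k '' S) := by
  refine le_antisymm (fun f hf => kSpan_le_span hf) (Submodule.span_le.2 ?_)
  rintro _ ⟨p, hp, rfl⟩
  exact mono_mem_kSpan hp

lemma idealOf_eq_span (S : Set (ℕ × ℕ)) (hS : UpClosed S) :
    idealOf k S hS = Ideal.span (mono k '' S) := by
  refine le_antisymm (fun f hf => ?_) (Ideal.span_le.2 ?_)
  · exact Submodule.span_le_restrictScalars k _ _ (kSpan_le_span hf)
  · rintro _ ⟨p, hp, rfl⟩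
    exact mono_mem_idealOf hp

/-- multiplication estimate -/
lemma mul_mem_kSpan {A B C : Set (ℕ × ℕ)}
    (hC : ∀ p ∈ A, ∀ q ∈ B, ((p.1 + q.1 : ℕ), (p.2 + q.2 : ℕ)) ∈ C)
    {f g : RR k} (hf : f ∈ kSpan k A) (hg : g ∈ kSpan k B) :
    f * g ∈ kSpan k C := by
  classical
  intro d hd
  rcases Finset.mem_add.1 (MvPolynomial.support_mul f g hd) with ⟨a, ha, b, hb, rfl⟩
  have := hC _ (hf a ha) _ (hg b hb)
  simpa using this


def Sv (v : ℕ) : Set (ℕ × ℕ) := {p | v ≤ p.2 ∧ 5*v ≤ 2*p.1 + p.2}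
def Tv (v : ℕ) : Set (ℕ × ℕ) := {p | v ≤ p.2}

lemma upClosed_Sv (v : ℕ) : UpClosed (Sv v) := by
  intro p hp q h1 h2; obtain ⟨a, b⟩ := hp; constructor <;> omega

lemma upClosed_Tv (v : ℕ) : UpClosed (Tv v) := by
  intro p hp q h1 h2; exact le_trans hp h2

lemma upClosed_ge (n : ℕ) : UpClosed {p : ℕ × ℕ | n ≤ p.1 + p.2} := by
  intro p hp q h1 h2; simp only [Set.mem_setOf_eq] at hp ⊢; omega

noncomputable def Igen (k : Type) [Field k] : Ideal (RR k) :=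
  Ideal.span {X 0 ^ 2 * X 1, X 0 * X 1 ^ 3, X 1 ^ 5}

noncomputable def mIdl (k : Type) [Field k] : Ideal (RR k) :=
  Ideal.span {X 0, X 1}

lemma Igen_le : Igen k ≤ idealOf k (Sv 1) (upClosed_Sv 1) := by
  rw [Igen, Ideal.span_le]
  rintro f hf
  simp only [Set.mem_insert_iff, Set.mem_singleton_iff] at hf
  rcases hf with rfl | rfl | rfl
  · have : (X 0 ^ 2 * X 1 : RR k) = mono k (2, 1) := by rw [mono_eq]; ring
    rw [this]; exact mono_mem_idealOf (by constructor <;> simp [Sv])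
  · have : (X 0 * X 1 ^ 3 : RR k) = mono k (1, 3) := by rw [mono_eq]; ring
    rw [this]; exact mono_mem_idealOf (by constructor <;> simp [Sv])
  · have : (X 1 ^ 5 : RR k) = mono k (0, 5) := by rw [mono_eq]; ring
    rw [this]; exact mono_mem_idealOf (by constructor <;> simp [Sv])

lemma m_le : mIdl k ≤ idealOf k {p | 1 ≤ p.1 + p.2} (upClosed_ge 1) := by
  rw [mIdl, Ideal.span_le]
  rintro f hf
  simp only [Set.mem_insert_iff, Set.mem_singleton_iff] at hf
  rcases hf with rfl | rfl
  · have : (X 0 : RR k) = mono k (1, 0) := by rw [mono_eq]; ring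
    rw [this]; exact mono_mem_idealOf (by simp)
  · have : (X 1 : RR k) = mono k (0, 1) := by rw [mono_eq]; ring
    rw [this]; exact mono_mem_idealOf (by simp)

lemma pow_le_idealOf (v : ℕ) : Igen k ^ v ≤ idealOf k (Sv v) (upClosed_Sv v) := by
  induction v with
  | zero => intro f _ d _; simp [Sv]
  | succ v ih =>
    rw [pow_succ]
    refine Ideal.mul_le.2 fun r hr s hs => ?_
    exact mul_mem_kSpan (A := Sv v) (B := Sv 1)
      (by intro p hp q hq; obtain ⟨a1, a2⟩ := hp; obtain ⟨b1, b2⟩ := hq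
          constructor <;> · simp only [Set.mem_setOf_eq] at *; omega)
      (ih hr) (Igen_le hs)

lemma mpow_le (n : ℕ) : mIdl k ^ n ≤ idealOf k {p | n ≤ p.1 + p.2} (upClosed_ge n) := by
  induction n with
  | zero => intro f _ d _; simp
  | succ n ih =>
    rw [pow_succ]
    refine Ideal.mul_le.2 fun r hr s hs => ?_
    exact mul_mem_kSpan (A := {p | n ≤ p.1 + p.2}) (B := {p | 1 ≤ p.1 + p.2})
      (by intro p hp q hq; simp only [Set.mem_setOf_eq] at *; omega)
      (ih hr) (m_le hs)

lemma mono_mem_pow {v : ℕ} {p : ℕ × ℕ} (hp : p ∈ Sv v) : mono k p ∈ Igen k ^ v := by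
  obtain ⟨i, j⟩ := p
  obtain ⟨hj, h5⟩ := hp
  simp only at hj h5
  set t := min i (2*v) with ht
  set a := t / 2 with ha
  set b := t % 2 with hb
  set c := v - t/2 - t%2 with hc
  set pp := i - t with hpp
  set qq := j - (a + 3*b + 5*c) with hqq
  have key : a + b + c = v ∧ i = pp + (2*a+b) ∧ j = qq + (a+3*b+5*c) := by
    rcases min_cases i (2*v) with ⟨h1, h2⟩ | ⟨h1, h2⟩ <;> omega
  obtain ⟨habc, hi, hj2⟩ := key
  have hmono : mono k (i, j)
      = (X 0 ^2 * X 1)^a * (X 0 * X 1 ^3)^b * (X 1 ^5)^c * (X 0 ^ pp * X 1 ^ qq) := by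
    rw [mono_eq]
    simp only
    rw [hi, hj2]; ring
  rw [hmono]
  have h1 : ((X 0 ^2 * X 1 : RR k))^a * (X 0 * X 1 ^3)^b * (X 1 ^5)^c
      ∈ Igen k ^ (a + b + c) := by
    rw [pow_add, pow_add]
    exact Ideal.mul_mem_mul (Ideal.mul_mem_mul
      (Ideal.pow_mem_pow (Ideal.subset_span (by simp)) a)
      (Ideal.pow_mem_pow (Ideal.subset_span (by simp)) b))
      (Ideal.pow_mem_pow (Ideal.subset_span (by simp)) c)
  rw [habc] at h1
  exact Ideal.mul_mem_right _ _ h1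

lemma Ipow_eq (v : ℕ) : Igen k ^ v = idealOf k (Sv v) (upClosed_Sv v) := by
  refine le_antisymm (pow_le_idealOf v) ?_
  rw [idealOf_eq_span, Ideal.span_le]
  rintro _ ⟨p, hp, rfl⟩
  exact mono_mem_pow hp

lemma sat_eq (v : ℕ) :
    Ideal.sat (idealOf k (Sv v) (upClosed_Sv v)) (mIdl k)
      = idealOf k (Tv v) (upClosed_Tv v) := by
  refine le_antisymm (iSup_le fun N => ?_) ?_
  · intro f hf
    have hX : (X 0 : RR k) ^ N ∈ mIdl k ^ N :=
      Ideal.pow_mem_pow (Ideal.subset_span (by simp)) N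
    have hfX : f * X 0 ^ N ∈ idealOf k (Sv v) (upClosed_Sv v) := by
      have := Submodule.mem_colon.1 hf _ hX
      rwa [smul_eq_mul] at this
    intro d hd
    have hXm : (X 0 : RR k) ^ N = monomial (dd (N, 0)) 1 := by
      rw [← mono, mono_eq]; ring
    have hco : coeff (d + dd (N, 0)) (f * X 0 ^ N) = coeff d f := by
      rw [hXm, coeff_mul_monomial, mul_one]
    have hmem : (d + dd (N, 0)) ∈ (f * X 0 ^ N).support := by
      rw [mem_support_iff, hco]
      exact mem_support_iff.1 hd
    have := hfX _ hmem
    obtain ⟨h1, _⟩ := this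
    simp only [Finsupp.add_apply, dd_apply1] at h1
    simpa [Tv] using (by omega : v ≤ d 1)
  · rw [idealOf_eq_span, Ideal.span_le]
    rintro _ ⟨p, hp, rfl⟩
    have hcol : mono k p ∈ Submodule.colon
        (idealOf k (Sv v) (upClosed_Sv v) : Submodule (RR k) (RR k)) ((mIdl k ^ (4*v) : Ideal (RR k)) : Set (RR k)) := by
      rw [Submodule.mem_colon]
      intro g hg
      rw [smul_eq_mul]
      exact mul_mem_kSpan (A := {p' | p.1 ≤ p'.1 ∧ p.2 ≤ p'.2})
        (B := {q | 4*v ≤ q.1 + q.2})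
        (by intro x hx y hy
            obtain ⟨hx1, hx2⟩ := hx
            simp only [Set.mem_setOf_eq] at hy
            have hv : v ≤ p.2 := hp
            constructor <;> · simp only [Set.mem_setOf_eq]; omega)
        (mono_mem_kSpan (by simp)) (mpow_le (4*v) hg)
    exact le_iSup (fun N => Submodule.colon
      (idealOf k (Sv v) (upClosed_Sv v) : Submodule (RR k) (RR k)) ((mIdl k ^ N : Ideal (RR k)) : Set (RR k))) (4*v) hcol


/-- the finite set of monomials between `I^v` and its saturation -/
def Fv (v : ℕ) : Finset (ℕ × ℕ) :=
  (Finset.range (2*v) ×ˢ Finset.range (5*v)).filter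
    (fun p => v ≤ p.2 ∧ 2*p.1 + p.2 < 5*v)

lemma mem_Fv {v : ℕ} {p : ℕ × ℕ} :
    p ∈ Fv v ↔ v ≤ p.2 ∧ 2*p.1 + p.2 < 5*v := by
  simp only [Fv, Finset.mem_filter, Finset.mem_product, Finset.mem_range]
  constructor
  · rintro ⟨_, h⟩; exact h
  · rintro ⟨h1, h2⟩; exact ⟨⟨by omega, by omega⟩, h1, h2⟩

lemma mem_Fv_iff {v : ℕ} {p : ℕ × ℕ} :
    p ∈ Fv v ↔ p ∈ Tv v ∧ p ∉ Sv v := by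
  rw [mem_Fv]
  simp only [Tv, Sv, Set.mem_setOf_eq, not_and]
  omega

lemma sum_helper (n : ℕ) : ∑ i ∈ Finset.range n, (2*n - 2*i) = n * (n+1) := by
  have h := Finset.sum_range_reflect (fun i => 2*n - 2*i) n
  have h2 : ∀ j ∈ Finset.range n, 2*n - 2*(n - 1 - j) = 2*j + 2 := by
    intro j hj; rw [Finset.mem_range] at hj; omega
  rw [Finset.sum_congr rfl h2] at h
  rw [← h, Finset.sum_add_distrib, ← Finset.mul_sum]
  have := Finset.sum_range_id_mul_two n
  have hsum : 2 * ∑ j ∈ Finset.range n, j = n * (n-1) := by omega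
  rw [hsum]
  simp only [Finset.sum_const, Finset.card_range, smul_eq_mul]
  cases n with
  | zero => simp
  | succ m => simp only [Nat.succ_sub_one]; ring

def emb (i : ℕ) : ℕ ↪ ℕ × ℕ :=
  ⟨fun j => (i, j), fun a b h => (Prod.ext_iff.1 h).2⟩

lemma Fv_eq_biUnion (v : ℕ) :
    Fv v = (Finset.range (2*v)).biUnion
      (fun i => (Finset.Ico v (5*v - 2*i)).map (emb i)) := by
  ext ⟨i, j⟩
  simp only [mem_Fv, Finset.mem_biUnion, Finset.mem_range, Finset.mem_map,
    Finset.mem_Ico, emb, Function.Embedding.coeFn_mk, Prod.mk.injEq]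
  constructor
  · rintro ⟨h1, h2⟩
    exact ⟨i, by omega, j, ⟨by omega, by omega⟩, rfl⟩
  · rintro ⟨a, ha, b, hb, h⟩
    obtain ⟨rfl, rfl⟩ := h
    omega

lemma card_Fv (v : ℕ) : (Fv v).card = 4*v^2 + 2*v := by
  classical
  rw [Fv_eq_biUnion, Finset.card_biUnion]
  · have h2 : ∀ i ∈ Finset.range (2*v),
        ((Finset.Ico v (5*v - 2*i)).map (emb i)).card = 2*(2*v) - 2*i := by
      intro i hi
      rw [Finset.mem_range] at hi
      rw [Finset.card_map, Nat.card_Ico]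
      omega
    rw [Finset.sum_congr rfl h2, sum_helper]
    ring
  · intro x _ y _ hxy
    rw [Function.onFun, Finset.disjoint_left]
    rintro ⟨a, b⟩ hm hm'
    simp only [Finset.mem_map, emb, Function.Embedding.coeFn_mk, Prod.mk.injEq] at hm hm'
    obtain ⟨_, _, rfl, _⟩ := hm
    obtain ⟨_, _, rfl, _⟩ := hm'
    exact hxy rfl


variable (k) in
/-- The quotient ring `R/I^v` as a module. -/
noncomputable abbrev Quot (v : ℕ) :=
  RR k ⧸ (idealOf k (Sv v) (upClosed_Sv v) : Submodule (RR k) (RR k))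

variable (k) in
noncomputable def phi (v : ℕ) : RR k →ₗ[k] Quot k v :=
  (Submodule.mkQ _).restrictScalars k

variable (k) in
/-- The image of the saturation in `R/I^v`. -/
noncomputable def QQ (v : ℕ) : Submodule (RR k) (Quot k v) :=
  Submodule.map (Submodule.mkQ _) (idealOf k (Tv v) (upClosed_Tv v))

variable (k) in
noncomputable def bb (v : ℕ) : Fv v → Quot k v := fun p => phi k v (mono k p.1)

lemma phi_eq_zero_iff {v : ℕ} (f : RR k) :
    phi k v f = 0 ↔ f ∈ idealOf k (Sv v) (upClosed_Sv v) := by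
  rw [phi]
  exact Submodule.Quotient.mk_eq_zero _

lemma linearIndependent_bb (v : ℕ) : LinearIndependent k (bb k v) := by
  classical
  rw [Fintype.linearIndependent_iff]
  intro g hg i
  by_contra hgi
  have hsum : phi k v (∑ x : Fv v, g x • mono k x.1) = 0 := by
    rw [map_sum]
    simpa only [map_smul, bb] using hg
  rw [phi_eq_zero_iff] at hsum
  have hco : coeff (dd i.1) (∑ x : Fv v, g x • mono k x.1) = g i := by
    rw [MvPolynomial.coeff_sum]
    rw [Finset.sum_eq_single i]
    · rw [MvPolynomial.coeff_smul, mono, coeff_monomial, if_pos rfl, smul_eq_mul, mul_one]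
    · intro x _ hx
      rw [MvPolynomial.coeff_smul, mono, coeff_monomial, if_neg, smul_eq_mul, mul_zero]
      intro h
      exact hx (Subtype.ext (dd_inj h))
    · intro h
      exact absurd (Finset.mem_univ i) h
  have hd : dd i.1 ∈ (∑ x : Fv v, g x • mono k x.1).support := by
    rw [mem_support_iff, hco]
    exact hgi
  have := hsum _ hd
  simp only [dd_apply0, dd_apply1] at this
  have hi := (mem_Fv_iff.1 i.2).2
  exact hi this

lemma restrictScalars_QQ (v : ℕ) :
    (QQ k v).restrictScalars k = Submodule.span k (Set.range (bb k v)) := by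
  classical
  have h1 : (QQ k v).restrictScalars k
      = Submodule.map (phi k v) ((idealOf k (Tv v) (upClosed_Tv v)).restrictScalars k) := by
    ext x
    simp only [Submodule.restrictScalars_mem, QQ, Submodule.mem_map, phi,
      LinearMap.coe_restrictScalars]
  rw [h1]
  have h2 : (idealOf k (Tv v) (upClosed_Tv v)).restrictScalars k
      = Submodule.span k (mono k '' Tv v) := by
    rw [← kSpan_eq_span]
    rfl
  rw [h2, Submodule.map_span]
  refine le_antisymm (Submodule.span_le.2 ?_) (Submodule.span_le.2 ?_)
  · rintro _ ⟨_, ⟨p, hp, rfl⟩, rfl⟩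
    by_cases hs : p ∈ Sv v
    · have : phi k v (mono k p) = 0 := (phi_eq_zero_iff _).2 (mono_mem_kSpan hs)
      rw [this]
      exact Submodule.zero_mem _
    · have hpF : p ∈ Fv v := mem_Fv_iff.2 ⟨hp, hs⟩
      exact Submodule.subset_span ⟨⟨p, hpF⟩, rfl⟩
  · rintro _ ⟨p, rfl⟩
    exact Submodule.subset_span ⟨mono k p.1, ⟨p.1, (mem_Fv_iff.1 p.2).1, rfl⟩, rfl⟩

instance QQ_finiteDimensional (v : ℕ) :
    FiniteDimensional k ↥((QQ k v).restrictScalars k) := by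
  rw [restrictScalars_QQ]
  exact FiniteDimensional.span_of_finite k (Set.finite_range _)

lemma finrank_QQ (v : ℕ) :
    Module.finrank k ↥((QQ k v).restrictScalars k) = 4*v^2 + 2*v := by
  rw [restrictScalars_QQ]
  rw [finrank_span_eq_card (linearIndependent_bb v)]
  rw [Fintype.card_coe, card_Fv]

end EpsMult

namespace EpsMult
variable {k : Type} [Field k]

/-- ordering of monomials: descending total degree, tie-break descending first coord -/
def rel (p q : ℕ × ℕ) : Prop :=
  q.1 + q.2 < p.1 + p.2 ∨ (q.1 + q.2 = p.1 + p.2 ∧ q.1 ≤ p.1)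

instance : DecidableRel rel := fun p q => by unfold rel; infer_instance

instance : IsTrans (ℕ × ℕ) rel := ⟨by intro a b c h1 h2; unfold rel at *; omega⟩

instance : IsAntisymm (ℕ × ℕ) rel := ⟨by
  intro a b h1 h2
  unfold rel at *
  have h3 : a.1 = b.1 ∧ a.2 = b.2 := by omega
  exact Prod.ext h3.1 h3.2⟩

instance : IsTotal (ℕ × ℕ) rel := ⟨by intro a b; unfold rel; omega⟩

def lst (v : ℕ) : List (ℕ × ℕ) := (Fv v).sort rel

lemma length_lst (v : ℕ) : (lst v).length = 4*v^2 + 2*v := by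
  rw [lst, Finset.length_sort, card_Fv]

lemma mem_lst {v : ℕ} {x : ℕ × ℕ} : x ∈ lst v ↔ x ∈ Fv v := Finset.mem_sort rel

def Uset (v t : ℕ) : Set (ℕ × ℕ) := Sv v ∪ {x | x ∈ (lst v).take t}

lemma upClosed_Uset (v t : ℕ) : UpClosed (Uset v t) := by
  intro p hp q h1 h2
  rcases hp with hp | hp
  · exact Or.inl (upClosed_Sv v p hp q h1 h2)
  · by_cases hqp : q = p
    · subst hqp; exact Or.inr hp
    have hpF : p ∈ Fv v := mem_lst.1 (List.mem_of_mem_take hp)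
    have hqT : q ∈ Tv v := upClosed_Tv v p (mem_Fv_iff.1 hpF).1 q h1 h2
    by_cases hqS : q ∈ Sv v
    · exact Or.inl hqS
    have hqF : q ∈ Fv v := mem_Fv_iff.2 ⟨hqT, hqS⟩
    right
    simp only [Set.mem_setOf_eq] at hp ⊢
    rw [List.mem_take_iff_getElem] at hp ⊢
    obtain ⟨n, hn, hpn⟩ := hp
    have hqMem : q ∈ lst v := mem_lst.2 hqF
    rw [List.mem_iff_getElem] at hqMem
    obtain ⟨m, hm, hqm⟩ := hqMem
    have hsum : p.1 + p.2 < q.1 + q.2 := by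
      have hne : p.1 ≠ q.1 ∨ p.2 ≠ q.2 := by
        by_contra hc
        push_neg at hc
        exact hqp (Prod.ext hc.1.symm hc.2.symm)
      omega
    have hmn : m < n := by
      by_contra hge
      push_neg at hge
      have hne : n ≠ m := by
        intro h
        subst h
        apply hqp
        rw [← hqm]
        exact hpn
      have hlt : n < m := by omega
      have hsorted : (lst v).Pairwise rel := Finset.pairwise_sort (Fv v) rel
      have hr := List.pairwise_iff_getElem.1 hsorted n m (by omega) hm hlt
      rw [hpn, hqm] at hr
      unfold rel at hr
      omega
    exact ⟨m, by omega, hqm⟩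

lemma Uset_subset_Tv (v t : ℕ) : Uset v t ⊆ Tv v := by
  rintro p (hp | hp)
  · exact hp.1
  · exact (mem_Fv_iff.1 (mem_lst.1 (List.mem_of_mem_take hp))).1

lemma Uset_mono (v : ℕ) {t t' : ℕ} (h : t ≤ t') : Uset v t ⊆ Uset v t' := by
  rintro p (hp | hp)
  · exact Or.inl hp
  · right
    simp only [Set.mem_setOf_eq] at hp ⊢
    rw [List.mem_take_iff_getElem] at hp ⊢
    obtain ⟨n, hn, hpn⟩ := hp
    exact ⟨n, by omega, hpn⟩

lemma Uset_top (v : ℕ) : Uset v ((lst v).length) = Tv v := by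
  apply Set.Subset.antisymm (Uset_subset_Tv v _)
  intro p hp
  by_cases hs : p ∈ Sv v
  · exact Or.inl hs
  · right
    simp only [Set.mem_setOf_eq, List.take_length]
    exact mem_lst.2 (mem_Fv_iff.2 ⟨hp, hs⟩)

noncomputable def CC (k : Type) [Field k] (v t : ℕ) : Ideal (RR k) :=
  idealOf k (Uset v t) (upClosed_Uset v t)

noncomputable def CCq (k : Type) [Field k] (v t : ℕ) : Submodule (RR k) (Quot k v) :=
  Submodule.map (Submodule.mkQ _) (CC k v t)

lemma idealOf_mono {S S' : Set (ℕ × ℕ)} {hS hS'} (h : S ⊆ S') :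
    idealOf k S hS ≤ idealOf k S' hS' := fun _ hf d hd => h (hf d hd)

lemma CCq_mono (v : ℕ) {t t' : ℕ} (h : t ≤ t') : CCq k v t ≤ CCq k v t' :=
  Submodule.map_mono (idealOf_mono (Uset_mono v h))

lemma CCq_le_QQ (v t : ℕ) : CCq k v t ≤ QQ k v :=
  Submodule.map_mono (idealOf_mono (Uset_subset_Tv v t))

lemma CCq_top (v : ℕ) : CCq k v ((lst v).length) = QQ k v := by
  rw [CCq, QQ]
  congr 1
  ext f
  rw [CC, mem_idealOf, mem_idealOf]
  simp only [Uset_top]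

lemma mem_CC_iff_mkQ {v t : ℕ} {f : RR k} :
    Submodule.mkQ _ f ∈ CCq k v t ↔ f ∈ CC k v t := by
  constructor
  · rintro ⟨y, hy, hxy⟩
    have hsub : f - y ∈ idealOf k (Sv v) (upClosed_Sv v) := by
      rw [← Submodule.Quotient.eq]
      exact hxy.symm
    have : f = y + (f - y) := by ring
    rw [this]
    exact (CC k v t).add_mem hy (idealOf_mono (Set.subset_union_left) hsub)
  · intro hf
    exact ⟨f, hf, rfl⟩

lemma CCq_strict (v : ℕ) {t : ℕ} (ht : t < (lst v).length) :
    CCq k v t < CCq k v (t+1) := by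
  refine lt_of_le_of_ne (CCq_mono v (by omega)) fun heq => ?_
  set p := (lst v)[t] with hp
  have hmem : Submodule.mkQ _ (mono k p) ∈ CCq k v (t+1) := by
    rw [mem_CC_iff_mkQ]
    intro d hd
    rw [support_mono, Finset.mem_singleton] at hd
    subst hd
    right
    simp only [Set.mem_setOf_eq, dd_apply0, dd_apply1]
    rw [List.mem_take_iff_getElem]
    exact ⟨t, by omega, by simp [hp]⟩
  rw [← heq, mem_CC_iff_mkQ] at hmem
  have hU : p ∈ Uset v t := by
    have := hmem (dd p) (by rw [support_mono]; exact Finset.mem_singleton_self _)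
    simpa using this
  rcases hU with hS | hT
  · exact (mem_Fv_iff.1 (mem_lst.1 (List.getElem_mem ht))).2 hS
  · simp only [Set.mem_setOf_eq] at hT
    rw [List.mem_take_iff_getElem] at hT
    obtain ⟨n, hn, hpn⟩ := hT
    have hnodup : (lst v).Nodup := Finset.sort_nodup (Fv v) rel
    have hinj := List.nodup_iff_injective_getElem.1 hnodup
    have hval : (lst v)[(⟨n, by omega⟩ : Fin (lst v).length)] = (lst v)[(⟨t, ht⟩ : Fin (lst v).length)] := by
      simp only [Fin.getElem_fin]
      rw [hpn, hp]
    have hfin := hinj hval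
    simp only [Fin.mk.injEq] at hfin
    omega

end EpsMult

namespace EpsMult
variable {k : Type} [Field k]

lemma restrictScalars_strictMono {M : Type*} [AddCommGroup M] [Module (RR k) M]
    [Module k M] [IsScalarTower k (RR k) M]
    {s t : Submodule (RR k) M} (h : s < t) :
    s.restrictScalars k < t.restrictScalars k := by
  rw [lt_iff_le_and_ne] at h ⊢
  refine ⟨fun x hx => h.1 hx, fun he => h.2 (Submodule.restrictScalars_injective k _ _ he)⟩

lemma fin_strictMono_bound {n : ℕ} {f : Fin (n+1) → ℕ} (hf : StrictMono f) :
    n ≤ f (Fin.last n) := by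
  have key : ∀ i : Fin (n+1), (i : ℕ) ≤ f i := by
    intro i
    induction i using Fin.induction with
    | zero => exact Nat.zero_le _
    | succ i ih =>
      have h1 := hf i.castSucc_lt_succ
      simp only [Fin.coe_castSucc] at ih
      simp only [Fin.val_succ]
      omega
  simpa using key (Fin.last n)

lemma length_bound (v : ℕ)
    (P : LTSeries {p' : Submodule (RR k) (Quot k v) // p' ≤ QQ k v}) :
    P.length ≤ 4*v^2 + 2*v := by
  haveI : ∀ i : Fin (P.length + 1),
      FiniteDimensional k ↥((P i).1.restrictScalars k) := by
    intro i
    have hle : (P i).1.restrictScalars k ≤ (QQ k v).restrictScalars k :=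
      fun x hx => (P i).2 hx
    exact Submodule.finiteDimensional_of_le hle
  have hf : StrictMono fun i : Fin (P.length + 1) =>
      Module.finrank k ↥((P i).1.restrictScalars k) := by
    intro i j hij
    exact Submodule.finrank_lt_finrank_of_lt (restrictScalars_strictMono (P.strictMono hij))
  have h1 := fin_strictMono_bound hf
  have h2 : Module.finrank k ↥((P (Fin.last P.length)).1.restrictScalars k)
      ≤ Module.finrank k ↥((QQ k v).restrictScalars k) :=
    Submodule.finrank_mono
      (fun x hx => (P (Fin.last P.length)).2 hx)
  rw [finrank_QQ] at h2
  omega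

lemma krullDim_QQ (v : ℕ) :
    Order.krullDim (Submodule (RR k) ↥(QQ k v))
      = (((4*v^2 + 2*v : ℕ) : ℕ∞) : WithBot ℕ∞) := by
  rw [Order.krullDim_eq_of_orderIso (Submodule.MapSubtype.orderIso (QQ k v))]
  haveI : Nonempty {p' : Submodule (RR k) (Quot k v) // p' ≤ QQ k v} := ⟨⟨⊥, bot_le⟩⟩
  apply le_antisymm
  · rw [Order.krullDim_eq_iSup_length, WithBot.coe_le_coe]
    exact iSup_le fun P => Nat.cast_le.2 (length_bound v P)
  · let PP : LTSeries {p' : Submodule (RR k) (Quot k v) // p' ≤ QQ k v} :=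
      { length := (lst v).length
        toFun := fun t => ⟨CCq k v t.1, CCq_le_QQ v t.1⟩
        step := fun i => by
          show (_ : {p' : Submodule (RR k) (Quot k v) // p' ≤ QQ k v}) < _
          rw [Subtype.mk_lt_mk]
          exact CCq_strict v i.isLt }
    have h := Order.LTSeries.length_le_krullDim PP
    have hlen : PP.length = 4*v^2 + 2*v := length_lst v
    rw [hlen] at h
    exact_mod_cast h

/-- The image of the saturation in `R/I^v`, as an ideal of the quotient ring. -/
noncomputable def QI (v : ℕ) : Ideal (Quot k v) where
  carrier := (QQ k v : Set (Quot k v))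
  add_mem' := (QQ k v).add_mem
  zero_mem' := (QQ k v).zero_mem
  smul_mem' := by
    intro c x hx
    obtain ⟨r, rfl⟩ := Ideal.Quotient.mk_surjective (I := (idealOf k (Sv v) (upClosed_Sv v))) c
    obtain ⟨y, hy, rfl⟩ := hx
    refine ⟨r * y, (idealOf k (Tv v) (upClosed_Tv v)).smul_mem' r hy, ?_⟩
    rw [smul_eq_mul]
    show (Ideal.Quotient.mk (idealOf k (Sv v) (upClosed_Sv v))) (r * y)
      = (Ideal.Quotient.mk (idealOf k (Sv v) (upClosed_Sv v))) r
        * (Ideal.Quotient.mk (idealOf k (Sv v) (upClosed_Sv v))) y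
    exact map_mul _ _ _

lemma QI_eq_map (v : ℕ) :
    Ideal.map (Submodule.mkQ (idealOf k (Sv v) (upClosed_Sv v) : Submodule (RR k) (RR k)))
      (idealOf k (Tv v) (upClosed_Tv v)) = QI v := by
  apply le_antisymm
  · rw [Ideal.map]
    refine Ideal.span_le.2 ?_
    rintro _ ⟨y, hy, rfl⟩
    exact ⟨y, hy, rfl⟩
  · rintro x ⟨y, hy, rfl⟩
    exact Ideal.mem_map_of_mem _ hy

/-- the tautological `R`-linear equivalence between the ideal `QI` and the submodule `QQ` -/
noncomputable def eqv (v : ℕ) : ↥(QI (k := k) v) ≃ₗ[RR k] ↥(QQ k v) where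
  toFun x := ⟨x.1, x.2⟩
  map_add' _ _ := rfl
  map_smul' _ _ := rfl
  invFun x := ⟨x.1, x.2⟩
  left_inv _ := rfl
  right_inv _ := rfl

lemma satQuotLength_congr {R : Type*} [CommRing R] (I m : Ideal R) (n : ℕ)
    (J : Ideal R) (h : I ^ n = J) :
    satQuotLength I m n = moduleLength R ↥((Ideal.sat J m).map (Submodule.mkQ J)) := by
  subst h; rfl

set_option maxHeartbeats 8000000 in
lemma satQuotLength_eq (v : ℕ) :
    satQuotLength (Igen k) (mIdl k) v = ((4*v^2 + 2*v : ℕ) : ℕ∞) := by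
  rw [satQuotLength_congr _ _ _ _ (Ipow_eq v), sat_eq, QI_eq_map]
  unfold moduleLength
  rw [Order.krullDim_eq_of_orderIso (Submodule.orderIsoMapComap (eqv v)), krullDim_QQ]
  rfl

end EpsMult

/-- Let `k` be a field, `R = k[X,Y]` with `m = (X,Y)`, and
`I = (X²Y, XY³, Y⁵)`. Then the ε-multiplicity of `I` equals `8`:
`lim_{v→∞} λ_R((I^v : m^∞)/I^v)·2!/v² = 8`. -/
theorem epsilon_multiplicity_monomial_ideal_eq_eight
    (k : Type) [Field k] :
    (∀ v : ℕ, satQuotLength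
        (Ideal.span {(MvPolynomial.X 0 : MvPolynomial (Fin 2) k) ^ 2 * MvPolynomial.X 1,
          MvPolynomial.X 0 * MvPolynomial.X 1 ^ 3, MvPolynomial.X 1 ^ 5})
        (Ideal.span {(MvPolynomial.X 0 : MvPolynomial (Fin 2) k), MvPolynomial.X 1}) v ≠ ⊤) ∧
    Tendsto
      (fun v : ℕ =>
        ((satQuotLength
            (Ideal.span {(MvPolynomial.X 0 : MvPolynomial (Fin 2) k) ^ 2 * MvPolynomial.X 1,
              MvPolynomial.X 0 * MvPolynomial.X 1 ^ 3, MvPolynomial.X 1 ^ 5})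
            (Ideal.span {(MvPolynomial.X 0 : MvPolynomial (Fin 2) k), MvPolynomial.X 1})
            v).toNat : ℝ) * (Nat.factorial 2) / (v : ℝ) ^ 2)
      atTop (nhds (8 : ℝ)) := by
  have hval : ∀ v : ℕ, satQuotLength
      (Ideal.span {(MvPolynomial.X 0 : MvPolynomial (Fin 2) k) ^ 2 * MvPolynomial.X 1,
        MvPolynomial.X 0 * MvPolynomial.X 1 ^ 3, MvPolynomial.X 1 ^ 5})
      (Ideal.span {(MvPolynomial.X 0 : MvPolynomial (Fin 2) k), MvPolynomial.X 1}) v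
      = ((4*v^2 + 2*v : ℕ) : ℕ∞) := fun v => EpsMult.satQuotLength_eq v
  constructor
  · intro v
    rw [hval]
    exact ENat.coe_ne_top _
  · have h0 : Tendsto (fun v : ℕ => 8 + 4 / (v : ℝ)) atTop (nhds 8) := by
      have h1 : Tendsto (fun v : ℕ => 4 / (v : ℝ)) atTop (nhds 0) :=
        Tendsto.div_atTop tendsto_const_nhds tendsto_natCast_atTop_atTop
      simpa using tendsto_const_nhds.add h1
    refine h0.congr' ?_
    filter_upwards [eventually_ge_atTop 1] with v hv
    rw [hval]
    have hv' : (0 : ℝ) < (v : ℝ) := by exact_mod_cast hv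
    rw [ENat.toNat_coe]
    push_cast
    field_simp
    ring
end
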